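/- arXiv:2407.20008 — 3 statements merged into one kernel-verified Lean document; each statement's English description precedes it below -/
import Mathlib

section
/- For positive integers m and n, the number of elements of L(m,n), i.e., the number of antitone functions λ : Fin m → ℕ with λ i ≤ n for all i, equals the binomial coefficient C(m+n, m) = (m+n)!/(m! n!). -/
/-- A strictly monotone ℕ-valued function on `Fin m` grows at least linearly. -/
lemma strictMono_gap {m : ℕ} {v : Fin m → ℕ} (hv : StrictMono v) :
    ∀ d : ℕ, ∀ i j : Fin m, (j : ℕ) = (i : ℕ) + d → v i + d ≤ v j := by
  intro d
  induction d with
  | zero =>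
    intro i j h
    have : i = j := Fin.ext (by omega)
    simp [this]
  | succ d ih =>
    intro i j h
    have hj' : (i : ℕ) + d < m := by have := j.is_lt; omega
    have h1 : v i + d ≤ v ⟨(i : ℕ) + d, hj'⟩ := ih i _ rfl
    have h2 : v ⟨(i : ℕ) + d, hj'⟩ < v j := hv (by simp [Fin.lt_def]; omega)
    omega

lemma rev_val_eq {m : ℕ} (i : Fin m) : (i.rev : ℕ) = m - ((i : ℕ) + 1) := rfl

/-- The number of partitions with at most `m` parts, each of size at most `n`
(antitone functions `Fin m → ℕ` bounded by `n`), is the binomial coefficient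
`C(m + n, m)`. -/
theorem card_youngL (m n : ℕ) (hm : 0 < m) (hn : 0 < n) :
    Nat.card {f : Fin m → ℕ // Antitone f ∧ ∀ i, f i ≤ n} = (m + n).choose m := by
  classical
  -- the staircase map
  have hbound : ∀ (f : Fin m → ℕ), (∀ i, f i ≤ n) → ∀ i : Fin m,
      f i.rev + (i : ℕ) < m + n := by
    intro f hf i
    have h1 : f i.rev ≤ n := hf _
    have h2 : (i : ℕ) < m := i.is_lt
    omega
  set e : {f : Fin m → ℕ // Antitone f ∧ ∀ i, f i ≤ n} → Fin m → Fin (m + n) :=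
    fun f i => ⟨f.1 i.rev + (i : ℕ), hbound f.1 f.2.2 i⟩ with he
  have hmono : ∀ f, StrictMono (e f) := by
    intro f i j hij
    have hrev : j.rev ≤ i.rev := by
      rw [Fin.le_def, rev_val_eq, rev_val_eq]
      have := Fin.lt_def.mp hij
      have := i.is_lt; have := j.is_lt
      omega
    have h1 : f.1 i.rev ≤ f.1 j.rev := f.2.1 hrev
    simp only [he, Fin.lt_def] at hij ⊢
    omega
  set F : {f : Fin m → ℕ // Antitone f ∧ ∀ i, f i ≤ n} →
      {s : Finset (Fin (m + n)) // s.card = m} :=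
    fun f => ⟨Finset.image (e f) Finset.univ, by
      rw [Finset.card_image_of_injective _ (hmono f).injective, Finset.card_univ,
        Fintype.card_fin]⟩ with hF
  have hbij : Function.Bijective F := by
    constructor
    · intro f g hfg
      have him : Finset.image (e f) Finset.univ = Finset.image (e g) Finset.univ :=
        congrArg Subtype.val hfg
      have hcard : (Finset.image (e f) Finset.univ).card = m := (F f).2
      have h1 : e f = (Finset.image (e f) Finset.univ).orderEmbOfFin hcard :=
        Finset.orderEmbOfFin_unique hcard
          (fun x => Finset.mem_image_of_mem _ (Finset.mem_univ x)) (hmono f)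
      have h2 : e g = (Finset.image (e f) Finset.univ).orderEmbOfFin hcard :=
        Finset.orderEmbOfFin_unique hcard
          (fun x => him ▸ Finset.mem_image_of_mem _ (Finset.mem_univ x)) (hmono g)
      have heq : e f = e g := h1.trans h2.symm
      ext i
      have := congrFun heq i.rev
      simpa [he, Fin.ext_iff, Fin.rev_rev] using this
    · rintro ⟨s, hs⟩
      set g := s.orderEmbOfFin hs with hg
      have hgm : StrictMono fun i : Fin m => ((g i : Fin (m+n)) : ℕ) :=
        fun i j hij => by exact_mod_cast g.strictMono hij
      -- key inequalities
      have hkey : ∀ i j : Fin m, (i : ℕ) ≤ j → (g i : ℕ) + ((j : ℕ) - i) ≤ g j := by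
        intro i j hij
        have := strictMono_gap hgm ((j : ℕ) - i) i j (by omega)
        omega
      have hge : ∀ i : Fin m, (i : ℕ) ≤ g i := by
        intro i
        have h1 := hkey ⟨0, hm⟩ i (Nat.zero_le _)
        have h2 : ((⟨0, hm⟩ : Fin m) : ℕ) = 0 := rfl
        omega
      have hle : ∀ i : Fin m, (g i : ℕ) ≤ n + i := by
        intro i
        have h2 : ((⟨m - 1, by omega⟩ : Fin m) : ℕ) = m - 1 := rfl
        have hlast : (i : ℕ) ≤ ((⟨m - 1, by omega⟩ : Fin m) : ℕ) := by
          have := i.is_lt; omega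
        have h1 := hkey i ⟨m - 1, by omega⟩ hlast
        have hb : (g ⟨m - 1, by omega⟩ : ℕ) < m + n := (g _).is_lt
        have := i.is_lt
        omega
      have hanti : Antitone fun i : Fin m => (g i.rev : ℕ) - (i.rev : ℕ) := by
        intro i j hij
        show (g j.rev : ℕ) - (j.rev : ℕ) ≤ (g i.rev : ℕ) - (i.rev : ℕ)
        have hrev : (j.rev : ℕ) ≤ (i.rev : ℕ) := by
          rw [rev_val_eq, rev_val_eq]
          have := Fin.le_def.mp hij
          have := i.is_lt; have := j.is_lt
          omega
        have h1 := hkey j.rev i.rev hrev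
        have h2 := hge j.rev
        omega
      have hbnd : ∀ i : Fin m, (fun i : Fin m => (g i.rev : ℕ) - (i.rev : ℕ)) i ≤ n := by
        intro i
        show (g i.rev : ℕ) - (i.rev : ℕ) ≤ n
        have := hle i.rev
        omega
      refine ⟨⟨fun i => (g i.rev : ℕ) - (i.rev : ℕ), hanti, hbnd⟩, ?_⟩
      · apply Subtype.ext
        simp only [hF]
        have heg : ∀ i : Fin m, e ⟨fun i => (g i.rev : ℕ) - (i.rev : ℕ), hanti, hbnd⟩ i = g i := by
          intro i
          have h1 := hge i
          apply Fin.ext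
          simp only [he, Fin.rev_rev]
          omega
        have himg : Finset.image (e ⟨fun i => (g i.rev : ℕ) - (i.rev : ℕ), hanti, hbnd⟩) Finset.univ
            = Finset.image (fun i => g i) Finset.univ := by
          apply Finset.image_congr
          intro x _
          exact heg x
        rw [himg]
        apply Finset.coe_injective
        rw [Finset.coe_image, Finset.coe_univ, Set.image_univ]
        exact Finset.range_orderEmbOfFin s hs
  rw [Nat.card_eq_of_bijective F hbij, Nat.card_eq_fintype_card,
    Fintype.card_finset_len, Fintype.card_fin]
end

section
/- For positive integers m and n, the rank numbers of L(m,n) are unimodal: writing p_k = #{λ ∈ L(m,n) : |λ| = k}, one has p_k ≤ p_{k+1} for all integers k with 0 ≤ k and 2k + 2 ≤ mn (equivalently p_0 ≤ p_1 ≤ ... ≤ p_{⌊mn/2⌋} ≥ ... ≥ p_{mn}). -/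
open scoped Classical
open Finset

namespace YU

variable {m n : ℕ}

abbrev P (m n : ℕ) := Fin m → Fin (n + 1)

/-- the sl2 weight function -/
noncomputable def g (m n s : ℕ) : ℚ := (s : ℚ) * ((m : ℚ) + (n : ℚ) - (s : ℚ))

/-- staircase value -/
def sv (f : P m n) (i : Fin m) : ℕ := (f i : ℕ) + (m - 1 - (i : ℕ))

def addable (f : P m n) (i : Fin m) : Prop :=
  (f i : ℕ) < n ∧ ∀ j : Fin m, (j : ℕ) + 1 = (i : ℕ) → (f i : ℕ) < (f j : ℕ)

def removable (f : P m n) (j : Fin m) : Prop :=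
  0 < (f j : ℕ) ∧ ∀ i : Fin m, (j : ℕ) + 1 = (i : ℕ) → (f i : ℕ) < (f j : ℕ)

def up (f : P m n) (i : Fin m) : P m n :=
  Function.update f i ⟨min ((f i : ℕ) + 1) n, by omega⟩

def down (f : P m n) (j : Fin m) : P m n :=
  Function.update f j ⟨(f j : ℕ) - 1, by omega⟩

lemma up_apply_ne (f : P m n) (i : Fin m) {j : Fin m} (h : j ≠ i) : up f i j = f j :=
  Function.update_of_ne h _ f

lemma up_apply_self (f : P m n) (i : Fin m) (h : (f i : ℕ) < n) :
    (up f i i : ℕ) = (f i : ℕ) + 1 := by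
  simp [up, Function.update_self]; omega

lemma down_apply_ne (f : P m n) (j : Fin m) {i : Fin m} (h : i ≠ j) : down f j i = f i :=
  Function.update_of_ne h _ f

lemma down_apply_self (f : P m n) (j : Fin m) : (down f j j : ℕ) = (f j : ℕ) - 1 := by
  simp [down, Function.update_self]

lemma antitone_of_adj (f : P m n)
    (h : ∀ i j : Fin m, (i : ℕ) + 1 = (j : ℕ) → (f j : ℕ) ≤ (f i : ℕ)) :
    Antitone fun i => (f i : ℕ) := by
  have key : ∀ d : ℕ, ∀ a b : Fin m, (a : ℕ) + d = (b : ℕ) → (f b : ℕ) ≤ (f a : ℕ) := by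
    intro d
    induction d with
    | zero => intro a b hab; have : a = b := Fin.ext (by omega); subst this; exact le_refl _
    | succ d ih =>
      intro a b hab
      have hc : (a : ℕ) + d < m := by have := b.isLt; omega
      set c : Fin m := ⟨(a : ℕ) + d, hc⟩ with hcdef
      have h1 : (f c : ℕ) ≤ (f a : ℕ) := ih a c rfl
      have h2 : (f b : ℕ) ≤ (f c : ℕ) := h c b (by simp [hcdef]; omega)
      omega
  intro a b hab
  exact key ((b : ℕ) - (a : ℕ)) a b (by have := Fin.le_def.mp hab; omega)

lemma antitone_adj {f : P m n} (hf : Antitone fun i => (f i : ℕ)) {i j : Fin m}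
    (h : (i : ℕ) + 1 = (j : ℕ)) : (f j : ℕ) ≤ (f i : ℕ) :=
  hf (by exact Fin.le_iff_val_le_val.mpr (by omega))


noncomputable def A (m n k : ℕ) : Finset (P m n) :=
  univ.filter fun f => (Antitone fun i => (f i : ℕ)) ∧ ∑ i, (f i : ℕ) = k

lemma mem_A {k : ℕ} {f : P m n} :
    f ∈ A m n k ↔ (Antitone fun i => (f i : ℕ)) ∧ ∑ i, (f i : ℕ) = k := by
  simp [A]

lemma antitone_up {f : P m n} (hf : Antitone fun i => (f i : ℕ)) {i : Fin m}
    (hi : addable f i) : Antitone fun j => (up f i j : ℕ) := by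
  apply antitone_of_adj
  intro a b hab
  by_cases hbi : b = i
  · subst hbi
    have hai : a ≠ b := by intro h; subst h; omega
    rw [up_apply_ne f b hai, up_apply_self f b hi.1]
    have := hi.2 a hab
    omega
  · rw [up_apply_ne f i hbi]
    by_cases hai : a = i
    · subst hai
      rw [up_apply_self f a hi.1]
      have := antitone_adj hf hab
      have : (f b : ℕ) ≤ (f a : ℕ) := this
      omega
    · rw [up_apply_ne f i hai]
      exact antitone_adj hf hab

lemma antitone_down {f : P m n} (hf : Antitone fun i => (f i : ℕ)) {j : Fin m}
    (hj : removable f j) : Antitone fun i => (down f j i : ℕ) := by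
  apply antitone_of_adj
  intro a b hab
  by_cases hbj : b = j
  · subst hbj
    have haj : a ≠ b := by intro h; subst h; omega
    rw [down_apply_ne f b haj, down_apply_self f b]
    have := antitone_adj hf hab
    omega
  · rw [down_apply_ne f j hbj]
    by_cases haj : a = j
    · subst haj
      rw [down_apply_self f a]
      have := hj.2 b hab
      omega
    · rw [down_apply_ne f j haj]
      exact antitone_adj hf hab

lemma sum_up {f : P m n} {i : Fin m} (hi : (f i : ℕ) < n) :
    ∑ j, (up f i j : ℕ) = (∑ j, (f j : ℕ)) + 1 := by
  have h1 : ∑ j, (up f i j : ℕ) = ((f i : ℕ) + 1) + ∑ j ∈ univ.erase i, (f j : ℕ) := by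
    rw [show (univ.erase i) = univ \ {i} from Finset.erase_eq _ _]
    have := Finset.sum_update_of_mem (Finset.mem_univ i)
      (fun j => (f j : ℕ)) (((f i : ℕ) + 1))
    rw [← this]
    apply Finset.sum_congr rfl
    intro j _
    by_cases hj : j = i
    · subst hj
      rw [Function.update_self]
      exact up_apply_self f j hi
    · rw [Function.update_of_ne hj, up_apply_ne f i hj]
  have h2 : ∑ j, (f j : ℕ) = (f i : ℕ) + ∑ j ∈ univ.erase i, (f j : ℕ) :=
    (Finset.add_sum_erase _ _ (Finset.mem_univ i)).symm
  omega

lemma sum_down {f : P m n} {j : Fin m} (hj : 0 < (f j : ℕ)) :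
    (∑ i, (down f j i : ℕ)) + 1 = ∑ i, (f i : ℕ) := by
  have h1 : ∑ i, (down f j i : ℕ) = ((f j : ℕ) - 1) + ∑ i ∈ univ.erase j, (f i : ℕ) := by
    rw [show (univ.erase j) = univ \ {j} from Finset.erase_eq _ _]
    have := Finset.sum_update_of_mem (Finset.mem_univ j)
      (fun i => (f i : ℕ)) (((f j : ℕ) - 1))
    rw [← this]
    apply Finset.sum_congr rfl
    intro i _
    by_cases hij : i = j
    · subst hij
      rw [Function.update_self]
      exact down_apply_self f i
    · rw [Function.update_of_ne hij, down_apply_ne f j hij]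
  have h2 : ∑ i, (f i : ℕ) = (f j : ℕ) + ∑ i ∈ univ.erase j, (f i : ℕ) :=
    (Finset.add_sum_erase _ _ (Finset.mem_univ j)).symm
  omega

lemma up_mem_A {k : ℕ} {f : P m n} (hf : f ∈ A m n k) {i : Fin m} (hi : addable f i) :
    up f i ∈ A m n (k + 1) := by
  rw [mem_A] at hf ⊢
  exact ⟨antitone_up hf.1 hi, by rw [sum_up hi.1, hf.2]⟩


/-- diagonal weight making the lowering operator adjoint to the raising operator -/
noncomputable def wt (f : P m n) : ℚ :=
  ∏ i, ∏ v ∈ Finset.range (f i : ℕ), g m n ((m - 1 - (i : ℕ)) + v + 1)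

lemma g_pos {s : ℕ} (h1 : 0 < s) (h2 : s < m + n) : 0 < g m n s := by
  unfold g
  have hc : (s : ℚ) < (m : ℚ) + (n : ℚ) := by
    have := (Nat.cast_lt (α := ℚ)).mpr h2
    push_cast at this ⊢
    linarith
  have : (0 : ℚ) < (s : ℚ) := by exact_mod_cast h1
  nlinarith

lemma wt_pos (f : P m n) : 0 < wt f := by
  unfold wt
  apply Finset.prod_pos
  intro i _
  apply Finset.prod_pos
  intro v hv
  rw [Finset.mem_range] at hv
  have hfi : (f i : ℕ) ≤ n := by omega
  have him : (i : ℕ) < m := i.isLt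
  exact g_pos (by omega) (by omega)

lemma sv_up_self {f : P m n} {i : Fin m} (hi : (f i : ℕ) < n) :
    sv (up f i) i = sv f i + 1 := by
  unfold sv
  rw [up_apply_self f i hi]
  omega

lemma sv_ne {f h : P m n} {j : Fin m} (hfh : f j = h j) : sv f j = sv h j := by
  unfold sv; rw [hfh]

lemma wt_up {f : P m n} {i : Fin m} (hi : (f i : ℕ) < n) :
    wt (up f i) = wt f * g m n (sv f i + 1) := by
  unfold wt
  rw [← Finset.mul_prod_erase univ _ (Finset.mem_univ i),
      ← Finset.mul_prod_erase univ
        (fun j => ∏ v ∈ Finset.range (f j : ℕ), g m n ((m - 1 - (j : ℕ)) + v + 1))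
        (Finset.mem_univ i)]
  have h1 : ∀ j ∈ univ.erase i,
      (∏ v ∈ Finset.range (up f i j : ℕ), g m n ((m - 1 - (j : ℕ)) + v + 1)) =
      ∏ v ∈ Finset.range (f j : ℕ), g m n ((m - 1 - (j : ℕ)) + v + 1) := by
    intro j hj
    rw [up_apply_ne f i (Finset.ne_of_mem_erase hj)]
  rw [Finset.prod_congr rfl h1]
  have h2 : (∏ v ∈ Finset.range (up f i i : ℕ), g m n ((m - 1 - (i : ℕ)) + v + 1)) =
      (∏ v ∈ Finset.range (f i : ℕ), g m n ((m - 1 - (i : ℕ)) + v + 1)) *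
        g m n (sv f i + 1) := by
    rw [up_apply_self f i hi, Finset.prod_range_succ]
    congr 1
    unfold sv
    congr 1
    omega
  rw [h2]
  ring

/-- matrix entry of the raising operator -/
noncomputable def aU (f μ : P m n) : ℚ :=
  ∑ i, if addable f i ∧ μ = up f i then (1 : ℚ) else 0

/-- matrix entry of the lowering operator -/
noncomputable def bD (f ν : P m n) : ℚ :=
  ∑ j, if removable f j ∧ ν = down f j then g m n (sv f j) else 0

lemma down_up {f : P m n} {i : Fin m} (hi : (f i : ℕ) < n) : down (up f i) i = f := by
  funext j
  by_cases hj : j = i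
  · subst hj
    apply Fin.ext
    rw [down_apply_self, up_apply_self f j hi]
    omega
  · rw [down_apply_ne _ _ hj, up_apply_ne f _ hj]

lemma up_down {f : P m n} {j : Fin m} (hj : 0 < (f j : ℕ)) : up (down f j) j = f := by
  funext i
  by_cases hi : i = j
  · subst hi
    apply Fin.ext
    have h1 : (down f i i : ℕ) = (f i : ℕ) - 1 := down_apply_self f i
    have h2 : (down f i i : ℕ) < n := by have := f i |>.isLt; omega
    rw [up_apply_self _ i h2, h1]
    omega
  · rw [up_apply_ne _ _ hi, down_apply_ne f _ hi]

lemma removable_up {f : P m n} (hf : Antitone fun i => (f i : ℕ)) {i : Fin m}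
    (hi : addable f i) : removable (up f i) i := by
  constructor
  · rw [up_apply_self f i hi.1]; omega
  · intro i' hii'
    have hne : i' ≠ i := by intro h; subst h; omega
    rw [up_apply_ne f i hne, up_apply_self f i hi.1]
    have : (f i' : ℕ) ≤ (f i : ℕ) := antitone_adj hf hii'
    omega

lemma addable_down {f : P m n} (hf : Antitone fun i => (f i : ℕ)) {j : Fin m}
    (hj : removable f j) : addable (down f j) j := by
  constructor
  · rw [down_apply_self]
    have := (f j).isLt
    have := hj.1
    omega
  · intro j' hjj'
    have hne : j' ≠ j := by intro h; subst h; omega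
    rw [down_apply_ne f j hne, down_apply_self]
    have h4 : (f j : ℕ) ≤ (f j' : ℕ) := antitone_adj hf hjj'
    have := hj.1
    omega

/-- the adjointness relation: `wt μ * aU f μ = wt f * bD μ f` for antitone `f, μ`. -/
lemma adjoint_rel {f μ : P m n} (hf : Antitone fun i => (f i : ℕ))
    (hμ : Antitone fun i => (μ i : ℕ)) :
    wt μ * aU f μ = wt f * bD μ f := by
  by_cases hex : ∃ i, addable f i ∧ μ = up f i
  · obtain ⟨i₀, hi₀, hμi₀⟩ := hex
    have haU : aU f μ = 1 := by
      unfold aU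
      rw [Finset.sum_eq_single i₀]
      · simp [hi₀, hμi₀]
      · intro i _ hne
        rw [if_neg]
        rintro ⟨hi, hμi⟩
        apply hne
        have : up f i i = up f i₀ i := by rw [← hμi, ← hμi₀]
        rw [up_apply_ne f i₀ hne] at this
        have h1 : (up f i i : ℕ) = (f i : ℕ) + 1 := up_apply_self f i hi.1
        have h2 : (up f i i : ℕ) = (f i : ℕ) := by rw [this]
        omega
      · intro h; exact absurd (Finset.mem_univ i₀) h
    have hbD : bD μ f = g m n (sv f i₀ + 1) := by
      unfold bD
      rw [Finset.sum_eq_single i₀]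
      · have hrem : removable μ i₀ := hμi₀ ▸ removable_up hf hi₀
        have hdown : f = down μ i₀ := by rw [hμi₀, down_up hi₀.1]
        rw [if_pos ⟨hrem, hdown⟩]
        congr 1
        rw [hμi₀]
        exact sv_up_self hi₀.1
      · intro j _ hne
        rw [if_neg]
        rintro ⟨hj, hfj⟩
        have : f i₀ = down μ j i₀ := by rw [← hfj]
        rw [down_apply_ne μ j hne.symm] at this
        have h2 : (μ i₀ : ℕ) = (f i₀ : ℕ) + 1 := by rw [hμi₀]; exact up_apply_self f i₀ hi₀.1
        rw [this] at h2
        omega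
      · intro h; exact absurd (Finset.mem_univ i₀) h
    rw [haU, hbD, hμi₀, wt_up hi₀.1]
    ring
  · have haU : aU f μ = 0 := by
      unfold aU
      apply Finset.sum_eq_zero
      intro i _
      rw [if_neg]
      intro h
      exact hex ⟨i, h⟩
    have hbD : bD μ f = 0 := by
      unfold bD
      apply Finset.sum_eq_zero
      intro j _
      rw [if_neg]
      rintro ⟨hj, hfj⟩
      apply hex
      refine ⟨j, ?_, ?_⟩
      · constructor
        · have h1 : (f j : ℕ) = (μ j : ℕ) - 1 := by rw [hfj]; exact down_apply_self μ j
          have h2 : (μ j : ℕ) < n + 1 := (μ j).isLt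
          have h3 : 0 < (μ j : ℕ) := hj.1
          omega
        · intro j' hjj'
          have hne : j' ≠ j := by intro h; subst h; omega
          have h1 : (f j : ℕ) = (μ j : ℕ) - 1 := by rw [hfj]; exact down_apply_self μ j
          have h2 : f j' = μ j' := by rw [hfj]; exact down_apply_ne μ j hne
          have h3 : (μ j : ℕ) ≤ (μ j' : ℕ) := antitone_adj hμ hjj'
          have h4 : 0 < (μ j : ℕ) := hj.1
          rw [h2]
          omega
      · rw [hfj, up_down hj.1]
    rw [haU, hbD]
    ring


lemma offdiag_cond {h : P m n} (hh : Antitone fun i => (h i : ℕ)) {i j : Fin m}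
    (hij : i ≠ j) :
    (addable h i ∧ removable (up h i) j) ↔ (removable h j ∧ addable (down h j) i) := by
  have hji : j ≠ i := hij.symm
  constructor
  · rintro ⟨hA, hR⟩
    have hupj : (up h i j : ℕ) = (h j : ℕ) := by rw [up_apply_ne h i hji]
    constructor
    · constructor
      · rw [← hupj]; exact hR.1
      · intro t hjt
        by_cases hti : t = i
        · subst hti
          have := hR.2 t hjt
          rw [up_apply_self h t hA.1, hupj] at this
          omega
        · have := hR.2 t hjt
          rw [up_apply_ne h i hti, hupj] at this
          exact this
    · constructor
      · rw [down_apply_ne h j hij]; exact hA.1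
      · intro i' hi'
        by_cases hi'j : i' = j
        · subst hi'j
          rw [down_apply_self, down_apply_ne h i' hij]
          have h1 := hR.2 i (by omega)
          rw [up_apply_self h i hA.1, hupj] at h1
          omega
        · rw [down_apply_ne h j hi'j, down_apply_ne h j hij]
          exact hA.2 i' hi'
  · rintro ⟨hR, hA⟩
    have hdowni : (down h j i : ℕ) = (h i : ℕ) := by rw [down_apply_ne h j hij]
    have hAn : (h i : ℕ) < n := by rw [← hdowni]; exact hA.1
    constructor
    · constructor
      · exact hAn
      · intro i' hi'
        by_cases hi'j : i' = j
        · subst hi'j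
          have := hA.2 i' hi'
          rw [down_apply_self, hdowni] at this
          have := hR.1
          omega
        · have := hA.2 i' hi'
          rw [down_apply_ne h j hi'j, hdowni] at this
          exact this
    · constructor
      · rw [up_apply_ne h i hji]
        exact hR.1
      · intro t hjt
        rw [up_apply_ne h i hji]
        by_cases hti : t = i
        · subst hti
          rw [up_apply_self h t hAn]
          have h1 := hA.2 j (by omega)
          rw [down_apply_self, hdowni] at h1
          have := hR.1
          omega
        · rw [up_apply_ne h i hti]
          exact hR.2 t hjt

lemma offdiag_eq {h : P m n} {i j : Fin m} (hij : i ≠ j) (hi : (h i : ℕ) < n)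
    (hj : 0 < (h j : ℕ)) : down (up h i) j = up (down h j) i := by
  funext t
  by_cases hti : t = i
  · subst hti
    apply Fin.ext
    rw [down_apply_ne _ j (by exact hij), up_apply_self h t hi,
        up_apply_self _ t (by rw [down_apply_ne h j hij]; exact hi),
        down_apply_ne h j hij]
  · by_cases htj : t = j
    · subst htj
      apply Fin.ext
      rw [down_apply_self, up_apply_ne h i hti, up_apply_ne _ i hti, down_apply_self]
    · rw [down_apply_ne _ j htj, up_apply_ne h i hti, up_apply_ne _ i hti,
          down_apply_ne h j htj]


lemma addable_ite {h : P m n} (hh : Antitone fun i => (h i : ℕ)) (i : Fin m) :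
    (if addable h i then g m n (sv h i + 1) else 0)
      = g m n (sv h i + 1) -
        (if (∃ j : Fin m, (j : ℕ) + 1 = (i : ℕ) ∧ h j = h i) then g m n (sv h i + 1) else 0) := by
  by_cases hA : addable h i
  · rw [if_pos hA, if_neg, sub_zero]
    rintro ⟨j, hj1, hj2⟩
    have := hA.2 j hj1
    rw [hj2] at this
    omega
  · rw [if_neg hA]
    by_cases hE : ∃ j : Fin m, (j : ℕ) + 1 = (i : ℕ) ∧ h j = h i
    · rw [if_pos hE]; ring
    · rw [if_neg hE, sub_zero]
      unfold addable at hA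
      push_neg at hA
      have hn : ¬ (h i : ℕ) < n := by
        intro hlt
        obtain ⟨j, hj1, hj2⟩ := hA hlt
        have h3 : (h i : ℕ) ≤ (h j : ℕ) := antitone_adj hh hj1
        exact hE ⟨j, hj1, Fin.ext (by omega)⟩
      have hival : (h i : ℕ) = n := by have := (h i).isLt; omega
      have hi0 : (i : ℕ) = 0 := by
        by_contra hi0
        have hjlt : (i : ℕ) - 1 < m := by have := i.isLt; omega
        set j : Fin m := ⟨(i : ℕ) - 1, hjlt⟩ with hjdef
        have hj1 : (j : ℕ) + 1 = (i : ℕ) := by simp [hjdef]; omega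
        have h3 : (h i : ℕ) ≤ (h j : ℕ) := antitone_adj hh hj1
        have h4 : (h j : ℕ) < n + 1 := (h j).isLt
        exact hE ⟨j, hj1, Fin.ext (by omega)⟩
      have hsv : sv h i + 1 = n + m := by unfold sv; have := i.isLt; omega
      rw [hsv]
      unfold g
      push_cast
      ring

lemma removable_ite {h : P m n} (hh : Antitone fun i => (h i : ℕ)) (i : Fin m) :
    (if removable h i then g m n (sv h i) else 0)
      = g m n (sv h i) -
        (if (∃ t : Fin m, (i : ℕ) + 1 = (t : ℕ) ∧ h i = h t) then g m n (sv h i) else 0) := by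
  by_cases hR : removable h i
  · rw [if_pos hR, if_neg, sub_zero]
    rintro ⟨t, ht1, ht2⟩
    have := hR.2 t ht1
    rw [← ht2] at this
    omega
  · rw [if_neg hR]
    by_cases hE : ∃ t : Fin m, (i : ℕ) + 1 = (t : ℕ) ∧ h i = h t
    · rw [if_pos hE]; ring
    · rw [if_neg hE, sub_zero]
      unfold removable at hR
      push_neg at hR
      have hn : ¬ 0 < (h i : ℕ) := by
        intro hlt
        obtain ⟨t, ht1, ht2⟩ := hR hlt
        have h3 : (h t : ℕ) ≤ (h i : ℕ) := antitone_adj hh ht1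
        exact hE ⟨t, ht1, Fin.ext (by omega)⟩
      have hival : (h i : ℕ) = 0 := by omega
      have hi0 : (i : ℕ) = m - 1 := by
        by_contra hi0
        have htlt : (i : ℕ) + 1 < m := by have := i.isLt; omega
        set t : Fin m := ⟨(i : ℕ) + 1, htlt⟩ with htdef
        have ht1 : (i : ℕ) + 1 = (t : ℕ) := by simp [htdef]
        have h3 : (h t : ℕ) ≤ (h i : ℕ) := antitone_adj hh ht1
        exact hE ⟨t, ht1, Fin.ext (by omega)⟩
      have hsv : sv h i = 0 := by unfold sv; have := i.isLt; omega
      rw [hsv]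
      unfold g
      push_cast
      ring

lemma cross_sum (h : P m n) :
    (∑ i : Fin m, if (∃ j : Fin m, (j : ℕ) + 1 = (i : ℕ) ∧ h j = h i) then g m n (sv h i + 1) else 0)
      = ∑ j : Fin m, if (∃ i : Fin m, (j : ℕ) + 1 = (i : ℕ) ∧ h j = h i) then g m n (sv h j) else 0 := by
  have key1 : ∀ i : Fin m,
      (if (∃ j : Fin m, (j : ℕ) + 1 = (i : ℕ) ∧ h j = h i) then g m n (sv h i + 1) else 0)
        = ∑ j : Fin m, if ((j : ℕ) + 1 = (i : ℕ) ∧ h j = h i) then g m n (sv h j) else 0 := by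
    intro i
    by_cases hE : ∃ j : Fin m, (j : ℕ) + 1 = (i : ℕ) ∧ h j = h i
    · obtain ⟨j₀, hj₀1, hj₀2⟩ := hE
      rw [if_pos ⟨j₀, hj₀1, hj₀2⟩, Finset.sum_eq_single j₀]
      · rw [if_pos ⟨hj₀1, hj₀2⟩]
        congr 1
        unfold sv
        rw [hj₀2]
        have := i.isLt
        omega
      · intro j _ hne
        rw [if_neg]
        rintro ⟨hj1, hj2⟩
        exact hne (Fin.ext (by omega))
      · intro habs; exact absurd (Finset.mem_univ j₀) habs
    · rw [if_neg hE]
      symm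
      apply Finset.sum_eq_zero
      intro j _
      rw [if_neg]
      rintro ⟨hj1, hj2⟩
      exact hE ⟨j, hj1, hj2⟩
  have key2 : ∀ j : Fin m,
      (if (∃ i : Fin m, (j : ℕ) + 1 = (i : ℕ) ∧ h j = h i) then g m n (sv h j) else 0)
        = ∑ i : Fin m, if ((j : ℕ) + 1 = (i : ℕ) ∧ h j = h i) then g m n (sv h j) else 0 := by
    intro j
    by_cases hE : ∃ i : Fin m, (j : ℕ) + 1 = (i : ℕ) ∧ h j = h i
    · obtain ⟨i₀, hi₀1, hi₀2⟩ := hE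
      rw [if_pos ⟨i₀, hi₀1, hi₀2⟩, Finset.sum_eq_single i₀]
      · rw [if_pos ⟨hi₀1, hi₀2⟩]
      · intro i _ hne
        rw [if_neg]
        rintro ⟨hi1, hi2⟩
        exact hne (Fin.ext (by omega))
      · intro habs; exact absurd (Finset.mem_univ i₀) habs
    · rw [if_neg hE]
      symm
      apply Finset.sum_eq_zero
      intro i _
      rw [if_neg]
      rintro ⟨hi1, hi2⟩
      exact hE ⟨i, hi1, hi2⟩
  rw [Finset.sum_congr rfl (fun i _ => key1 i), Finset.sum_congr rfl (fun j _ => key2 j),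
      Finset.sum_comm]

lemma two_mul_D (m : ℕ) : 2 * (∑ i : Fin m, (m - 1 - (i : ℕ))) + m = m * m := by
  have hrev : (∑ i : Fin m, (m - 1 - (i : ℕ))) = ∑ i : Fin m, (i : ℕ) := by
    rw [Fin.sum_univ_eq_sum_range (fun i => m - 1 - i), Fin.sum_univ_eq_sum_range (fun i => i)]
    exact Finset.sum_range_reflect (fun j => j) m
  have hsum : (∑ i : Fin m, (m - 1 - (i : ℕ))) + (∑ i : Fin m, (i : ℕ))
      = ∑ _i : Fin m, (m - 1) := by
    rw [← Finset.sum_add_distrib]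
    apply Finset.sum_congr rfl
    intro i _
    have := i.isLt
    omega
  rw [Finset.sum_const, Finset.card_univ, Fintype.card_fin, smul_eq_mul] at hsum
  rcases Nat.eq_zero_or_pos m with hm | hm
  · subst hm; simp
  · have : m * (m - 1) + m = m * m := by
      cases m with
      | zero => simp
      | succ s => simp [Nat.succ_sub_one]; ring
    omega

lemma diag_sum {k : ℕ} {h : P m n} (hmem : h ∈ A m n k) :
    (∑ i, if addable h i then g m n (sv h i + 1) else 0)
      - (∑ i, if removable h i then g m n (sv h i) else 0)
      = (m : ℚ) * n - 2 * k := by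
  obtain ⟨hh, hsum⟩ := mem_A.mp hmem
  rw [Finset.sum_congr rfl (fun i _ => addable_ite hh i),
      Finset.sum_congr rfl (fun i _ => removable_ite hh i),
      Finset.sum_sub_distrib, Finset.sum_sub_distrib, cross_sum]
  have hsv : (∑ i, sv h i) = k + ∑ i : Fin m, (m - 1 - (i : ℕ)) := by
    unfold sv
    rw [Finset.sum_add_distrib, hsum]
  have h2D := two_mul_D m
  set D := ∑ i : Fin m, (m - 1 - (i : ℕ)) with hD
  have e1 : ∀ i : Fin m, g m n (sv h i + 1) - g m n (sv h i)
      = ((m : ℚ) + n - 1) - 2 * (sv h i : ℚ) := by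
    intro i
    unfold g
    push_cast
    ring
  have e2 : (∑ i, g m n (sv h i + 1)) - (∑ i, g m n (sv h i))
      = (m : ℚ) * ((m : ℚ) + n - 1) - 2 * ((∑ i, sv h i : ℕ) : ℚ) := by
    rw [← Finset.sum_sub_distrib, Finset.sum_congr rfl (fun i _ => e1 i),
        Finset.sum_sub_distrib, Finset.sum_const, Finset.card_univ, Fintype.card_fin,
        ← Finset.mul_sum]
    push_cast
    ring
  have e3 : ((∑ i, sv h i : ℕ) : ℚ) = (k : ℚ) + (D : ℚ) := by
    rw [hsv]; push_cast; ring
  have e4 : 2 * (D : ℚ) + (m : ℚ) = (m : ℚ) * m := by exact_mod_cast congrArg (Nat.cast : ℕ → ℚ) h2D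
  have key : (∑ i, g m n (sv h i + 1)) - (∑ i, g m n (sv h i)) = (m : ℚ) * n - 2 * k := by
    rw [e2, e3]; linarith [e4]
  linarith [key]


lemma sum_collapse {Q : Prop} (c : P m n) (x : P m n → ℚ) :
    (∑ μ : P m n, if Q ∧ μ = c then x μ else 0) = if Q then x c else 0 := by
  by_cases hQ : Q
  · simp only [hQ, true_and]
    rw [Finset.sum_ite_eq' univ c x]
    simp
  · simp [hQ]

lemma ite_sum {Q : Prop} {C : Fin m → Prop} (x : Fin m → ℚ) :
    (if Q then (∑ j, if C j then x j else 0) else 0) = ∑ j, if Q ∧ C j then x j else 0 := by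
  by_cases hQ : Q <;> simp [hQ]

lemma comm_rel {k : ℕ} {f h : P m n} (hf : f ∈ A m n k) (hh : h ∈ A m n k) :
    (∑ μ : P m n, bD μ f * aU h μ)
      = (∑ ν : P m n, bD h ν * aU ν f) + (if f = h then (m : ℚ) * n - 2 * k else 0) := by
  have hanti := (mem_A.mp hh).1
  have hLHS : (∑ μ : P m n, bD μ f * aU h μ) = ∑ i : Fin m, ∑ j : Fin m,
      (if (addable h i ∧ removable (up h i) j ∧ f = down (up h i) j)
        then g m n (sv (up h i) j) else 0) := by
    unfold aU
    have e : ∀ μ : P m n, bD μ f * (∑ i, if addable h i ∧ μ = up h i then (1 : ℚ) else 0)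
        = ∑ i, if addable h i ∧ μ = up h i then bD μ f else 0 := by
      intro μ
      rw [Finset.mul_sum]
      simp only [mul_ite, mul_one, mul_zero]
    rw [Finset.sum_congr rfl (fun μ _ => e μ), Finset.sum_comm]
    apply Finset.sum_congr rfl
    intro i _
    rw [sum_collapse (up h i) (fun μ => bD μ f)]
    unfold bD
    by_cases hA : addable h i
    · simp only [hA, if_true, true_and]
    · simp [hA]
  have hRHS : (∑ ν : P m n, bD h ν * aU ν f) = ∑ j : Fin m, ∑ i : Fin m,
      (if (removable h j ∧ addable (down h j) i ∧ f = up (down h j) i)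
        then g m n (sv h j) else 0) := by
    unfold bD
    have e : ∀ ν : P m n,
        (∑ j, if removable h j ∧ ν = down h j then g m n (sv h j) else 0) * aU ν f
        = ∑ j, if removable h j ∧ ν = down h j then g m n (sv h j) * aU ν f else 0 := by
      intro ν
      rw [Finset.sum_mul]
      simp only [ite_mul, zero_mul]
    rw [Finset.sum_congr rfl (fun ν _ => e ν), Finset.sum_comm]
    apply Finset.sum_congr rfl
    intro j _
    rw [sum_collapse (down h j) (fun ν => g m n (sv h j) * aU ν f)]
    unfold aU
    rw [Finset.mul_sum]
    simp only [mul_ite, mul_one, mul_zero]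
    by_cases hR : removable h j
    · simp only [hR, if_true, true_and]
    · simp [hR]
  have key : ∀ i j : Fin m, i ≠ j →
      (if (addable h i ∧ removable (up h i) j ∧ f = down (up h i) j)
        then g m n (sv (up h i) j) else 0)
      = (if (removable h j ∧ addable (down h j) i ∧ f = up (down h j) i)
        then g m n (sv h j) else 0) := by
    intro i j hij
    have hsv : sv (up h i) j = sv h j := sv_ne (up_apply_ne h i hij.symm)
    rw [hsv]
    by_cases hc : addable h i ∧ removable (up h i) j
    · have hc2 := (offdiag_cond hanti hij).mp hc
      have heq : down (up h i) j = up (down h j) i := offdiag_eq hij hc.1.1 hc2.1.1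
      by_cases hfe : f = down (up h i) j
      · rw [if_pos ⟨hc.1, hc.2, hfe⟩, if_pos ⟨hc2.1, hc2.2, by rw [← heq]; exact hfe⟩]
      · rw [if_neg, if_neg]
        · rintro ⟨_, _, hfu⟩
          exact hfe (by rw [heq]; exact hfu)
        · rintro ⟨_, _, hfu⟩
          exact hfe hfu
    · rw [if_neg, if_neg]
      · rintro ⟨h1, h2, _⟩
        exact hc ((offdiag_cond hanti hij).mpr ⟨h1, h2⟩)
      · rintro ⟨h1, h2, _⟩
        exact hc ⟨h1, h2⟩
  have diag1 : ∀ i : Fin m,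
      (if (addable h i ∧ removable (up h i) i ∧ f = down (up h i) i)
        then g m n (sv (up h i) i) else 0)
      = (if (addable h i ∧ f = h) then g m n (sv h i + 1) else 0) := by
    intro i
    by_cases hA : addable h i
    · rw [down_up hA.1, sv_up_self hA.1]
      have hrem := removable_up hanti hA
      by_cases hfe : f = h
      · rw [if_pos ⟨hA, hrem, hfe⟩, if_pos ⟨hA, hfe⟩]
      · rw [if_neg (by rintro ⟨_, _, hfu⟩; exact hfe hfu),
            if_neg (by rintro ⟨_, hfu⟩; exact hfe hfu)]
    · rw [if_neg (by rintro ⟨h1, _, _⟩; exact hA h1), if_neg (by rintro ⟨h1, _⟩; exact hA h1)]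
  have diag2 : ∀ j : Fin m,
      (if (removable h j ∧ addable (down h j) j ∧ f = up (down h j) j)
        then g m n (sv h j) else 0)
      = (if (removable h j ∧ f = h) then g m n (sv h j) else 0) := by
    intro j
    by_cases hR : removable h j
    · rw [up_down hR.1]
      have hadd := addable_down hanti hR
      by_cases hfe : f = h
      · rw [if_pos ⟨hR, hadd, hfe⟩, if_pos ⟨hR, hfe⟩]
      · rw [if_neg (by rintro ⟨_, _, hfu⟩; exact hfe hfu),
            if_neg (by rintro ⟨_, hfu⟩; exact hfe hfu)]
    · rw [if_neg (by rintro ⟨h1, _, _⟩; exact hR h1), if_neg (by rintro ⟨h1, _⟩; exact hR h1)]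
  have main : ∀ i : Fin m,
      (∑ j : Fin m, if (addable h i ∧ removable (up h i) j ∧ f = down (up h i) j)
          then g m n (sv (up h i) j) else 0)
      = (∑ j : Fin m, if (removable h j ∧ addable (down h j) i ∧ f = up (down h j) i)
          then g m n (sv h j) else 0)
        + ((if (addable h i ∧ f = h) then g m n (sv h i + 1) else 0)
            - (if (removable h i ∧ f = h) then g m n (sv h i) else 0)) := by
    intro i
    rw [← Finset.add_sum_erase univ _ (Finset.mem_univ i),
        ← Finset.add_sum_erase univ
          (fun j => if (removable h j ∧ addable (down h j) i ∧ f = up (down h j) i)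
            then g m n (sv h j) else 0) (Finset.mem_univ i)]
    rw [Finset.sum_congr rfl
      (fun j hj => key i j (fun hctr => (Finset.ne_of_mem_erase hj) hctr.symm))]
    rw [diag1 i, diag2 i]
    ring
  rw [hLHS, hRHS, Finset.sum_congr rfl (fun i _ => main i), Finset.sum_add_distrib,
      Finset.sum_comm, Finset.sum_sub_distrib]
  congr 1
  by_cases hfe : f = h
  · subst hfe
    simp only [and_true]
    exact diag_sum hf
  · simp [hfe]


noncomputable def Uop (x : P m n → ℚ) (μ : P m n) : ℚ := ∑ f, aU f μ * x f

noncomputable def Dop (x : P m n → ℚ) (ν : P m n) : ℚ := ∑ f, bD f ν * x f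

lemma aU_support {h μ : P m n} (hne : aU h μ ≠ 0) : ∃ i, addable h i ∧ μ = up h i := by
  by_contra hex
  exact hne (Finset.sum_eq_zero fun i _ => if_neg (fun hc => hex ⟨i, hc⟩))

lemma bD_support {h ν : P m n} (hne : bD h ν ≠ 0) : ∃ j, removable h j ∧ ν = down h j := by
  by_contra hex
  exact hne (Finset.sum_eq_zero fun j _ => if_neg (fun hc => hex ⟨j, hc⟩))

lemma U_inj {k : ℕ} (hk2 : 2 * k + 2 ≤ m * n) (x : P m n → ℚ)
    (hsupp : ∀ f, f ∉ A m n k → x f = 0)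
    (hU : ∀ μ, Uop x μ = 0) : ∀ f, x f = 0 := by
  classical
  set c : ℚ := (m : ℚ) * n - 2 * k with hc
  have hcpos : 0 < c := by
    rw [hc]
    have : (2 * k + 2 : ℚ) ≤ (m : ℚ) * n := by exact_mod_cast hk2
    push_cast at this ⊢
    linarith
  -- step 1: the quadratic form vanishes
  have hS : (∑ μ : P m n, wt μ * (Uop x μ) ^ 2) = 0 :=
    Finset.sum_eq_zero fun μ _ => by rw [hU μ]; ring
  -- step 2: expand
  have e1 : ∀ μ : P m n, wt μ * (Uop x μ) ^ 2
      = ∑ f, ∑ h, x f * x h * (wt μ * aU f μ * aU h μ) := by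
    intro μ
    unfold Uop
    rw [sq, Finset.sum_mul_sum, Finset.mul_sum]
    refine Finset.sum_congr rfl fun f _ => ?_
    rw [Finset.mul_sum]
    refine Finset.sum_congr rfl fun h _ => ?_
    ring
  have e2 : (∑ μ : P m n, wt μ * (Uop x μ) ^ 2)
      = ∑ f : P m n, ∑ h : P m n, x f * x h * (∑ μ, wt μ * aU f μ * aU h μ) := by
    rw [Finset.sum_congr rfl fun μ _ => e1 μ, Finset.sum_comm]
    refine Finset.sum_congr rfl fun f _ => ?_
    rw [Finset.sum_comm]
    refine Finset.sum_congr rfl fun h _ => ?_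
    rw [Finset.mul_sum]
  -- step 3: adjointness
  have e3 : ∀ f h : P m n, f ∈ A m n k → h ∈ A m n k →
      (∑ μ : P m n, wt μ * aU f μ * aU h μ) = wt f * (∑ μ : P m n, bD μ f * aU h μ) := by
    intro f h hfA hhA
    rw [Finset.mul_sum]
    refine Finset.sum_congr rfl fun μ _ => ?_
    by_cases hz : aU h μ = 0
    · rw [hz]; ring
    · obtain ⟨i, hi, hμ⟩ := aU_support hz
      have hμanti : Antitone fun t => ((μ t : ℕ)) := by
        rw [hμ]; exact antitone_up (mem_A.mp hhA).1 hi
      have hadj := adjoint_rel (mem_A.mp hfA).1 hμanti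
      rw [hadj]
      ring
  -- step 4: commutator
  have e5 : ∀ f h : P m n, x f * x h * (∑ μ, wt μ * aU f μ * aU h μ)
      = x f * x h * (wt f * (∑ ν, bD h ν * aU ν f))
        + (if f = h then x f * x h * wt f * c else 0) := by
    intro f h
    by_cases hfA : f ∈ A m n k
    · by_cases hhA : h ∈ A m n k
      · rw [e3 f h hfA hhA, comm_rel hfA hhA]
        by_cases hfe : f = h
        · rw [if_pos hfe, if_pos hfe]
          ring
        · rw [if_neg hfe, if_neg hfe]
          ring
      · rw [hsupp h hhA]
        simp
    · rw [hsupp f hfA]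
      simp
  -- step 5: the D-part is a nonnegative quadratic form
  have e6 : ∀ ν f h : P m n, x f * x h * (wt f * (bD h ν * aU ν f))
      = wt ν * ((bD f ν * x f) * (bD h ν * x h)) := by
    intro ν f h
    by_cases hzf : x f = 0
    · rw [hzf]; ring
    · by_cases hzh : x h = 0
      · rw [hzh]; ring
      · by_cases hzD : bD h ν = 0
        · rw [hzD]; ring
        · have hhA : h ∈ A m n k := by
            by_contra hcon; exact hzh (hsupp h hcon)
          have hfA : f ∈ A m n k := by
            by_contra hcon; exact hzf (hsupp f hcon)
          obtain ⟨j, hj, hν⟩ := bD_support hzD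
          have hνanti : Antitone fun t => ((ν t : ℕ)) := by
            rw [hν]; exact antitone_down (mem_A.mp hhA).1 hj
          have hadj := adjoint_rel hνanti (mem_A.mp hfA).1
          -- hadj : wt f * aU ν f = wt ν * bD f ν
          linear_combination (x f * x h * bD h ν) * hadj
  have e7 : (∑ f : P m n, ∑ h : P m n, x f * x h * (wt f * (∑ ν, bD h ν * aU ν f)))
      = ∑ ν : P m n, wt ν * (Dop x ν) ^ 2 := by
    have inner : ∀ f h : P m n, x f * x h * (wt f * (∑ ν, bD h ν * aU ν f))
        = ∑ ν : P m n, wt ν * ((bD f ν * x f) * (bD h ν * x h)) := by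
      intro f h
      rw [Finset.mul_sum, Finset.mul_sum]
      exact Finset.sum_congr rfl fun ν _ => e6 ν f h
    rw [Finset.sum_congr rfl fun f _ => Finset.sum_congr rfl fun h _ => inner f h]
    calc (∑ f : P m n, ∑ h : P m n, ∑ ν : P m n, wt ν * ((bD f ν * x f) * (bD h ν * x h)))
        = ∑ f : P m n, ∑ ν : P m n, ∑ h : P m n, wt ν * ((bD f ν * x f) * (bD h ν * x h)) :=
          Finset.sum_congr rfl fun f _ => Finset.sum_comm
      _ = ∑ ν : P m n, ∑ f : P m n, ∑ h : P m n, wt ν * ((bD f ν * x f) * (bD h ν * x h)) :=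
          Finset.sum_comm
      _ = ∑ ν : P m n, wt ν * (Dop x ν) ^ 2 := by
          refine Finset.sum_congr rfl fun ν _ => ?_
          unfold Dop
          rw [sq, Finset.sum_mul_sum, Finset.mul_sum]
          exact Finset.sum_congr rfl fun f _ => (Finset.mul_sum _ _ _).symm
  -- assemble everything
  have e9 : (∑ f : P m n, ∑ h : P m n, x f * x h * (∑ μ, wt μ * aU f μ * aU h μ))
      = (∑ ν : P m n, wt ν * (Dop x ν) ^ 2) + c * ∑ f : P m n, wt f * (x f) ^ 2 := by
    rw [Finset.sum_congr rfl fun f (_ : f ∈ univ) => Finset.sum_congr rfl fun h _ => e5 f h]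
    rw [Finset.sum_congr rfl fun f (_ : f ∈ univ) => Finset.sum_add_distrib,
        Finset.sum_add_distrib]
    rw [e7]
    have hB : (∑ f : P m n, ∑ h : P m n, if f = h then x f * x h * wt f * c else 0)
        = c * ∑ f : P m n, wt f * x f ^ 2 := by
      rw [Finset.mul_sum]
      refine Finset.sum_congr rfl fun f _ => ?_
      rw [Finset.sum_ite_eq univ f (fun h => x f * x h * wt f * c)]
      simp only [Finset.mem_univ, if_true]
      ring
    rw [hB]
  have hfinal : (∑ ν : P m n, wt ν * (Dop x ν) ^ 2) + c * (∑ f : P m n, wt f * (x f) ^ 2)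
      = 0 := by rw [← e9, ← e2, hS]
  have hDnn : 0 ≤ ∑ ν : P m n, wt ν * (Dop x ν) ^ 2 :=
    Finset.sum_nonneg fun ν _ => mul_nonneg (wt_pos ν).le (sq_nonneg _)
  have hXnn : ∀ f ∈ (univ : Finset (P m n)), 0 ≤ wt f * (x f) ^ 2 :=
    fun f _ => mul_nonneg (wt_pos f).le (sq_nonneg _)
  have hX0 : (∑ f : P m n, wt f * (x f) ^ 2) = 0 := by
    have h1 : 0 ≤ ∑ f : P m n, wt f * (x f) ^ 2 := Finset.sum_nonneg hXnn
    nlinarith [hfinal, hDnn, h1, hcpos]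
  intro f
  have hterm := (Finset.sum_eq_zero_iff_of_nonneg hXnn).mp hX0 f (Finset.mem_univ f)
  have hw := wt_pos f
  have hsq : (x f) ^ 2 = 0 := by
    rcases mul_eq_zero.mp hterm with h | h
    · exact absurd h (ne_of_gt hw)
    · exact h
  exact pow_eq_zero_iff (two_ne_zero) |>.mp hsq

lemma up_not_mem {k : ℕ} {f μ : P m n} (hf : f ∈ A m n k) (hμ : μ ∉ A m n (k + 1)) :
    aU f μ = 0 := by
  by_contra hne
  obtain ⟨i, hi, hup⟩ := aU_support hne
  exact hμ (hup ▸ up_mem_A hf hi)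

lemma card_A_le {k : ℕ} (hk2 : 2 * k + 2 ≤ m * n) :
    (A m n k).card ≤ (A m n (k + 1)).card := by
  classical
  let T : (↥(A m n k) → ℚ) →ₗ[ℚ] (↥(A m n (k + 1)) → ℚ) :=
    { toFun := fun x μ => ∑ f : ↥(A m n k), aU f.1 μ.1 * x f
      map_add' := by
        intro x y
        funext μ
        show (∑ f : ↥(A m n k), aU f.1 μ.1 * (x f + y f))
          = (∑ f : ↥(A m n k), aU f.1 μ.1 * x f) + ∑ f : ↥(A m n k), aU f.1 μ.1 * y f
        simp only [mul_add]
        rw [Finset.sum_add_distrib]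
      map_smul' := by
        intro cq x
        funext μ
        show (∑ f : ↥(A m n k), aU f.1 μ.1 * (cq * x f))
          = cq * ∑ f : ↥(A m n k), aU f.1 μ.1 * x f
        rw [Finset.mul_sum]
        exact Finset.sum_congr rfl fun f _ => by ring }
  have hTinj : Function.Injective T := by
    rw [← LinearMap.ker_eq_bot, LinearMap.ker_eq_bot']
    intro x hx
    set xt : P m n → ℚ := fun f => if hf : f ∈ A m n k then x ⟨f, hf⟩ else 0 with hxt
    have hsupp : ∀ f, f ∉ A m n k → xt f = 0 := by
      intro f hf
      simp only [hxt, dif_neg hf]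
    have hUxt : ∀ μ : P m n, Uop xt μ = ∑ f : ↥(A m n k), aU f.1 μ * x f := by
      intro μ
      unfold Uop
      rw [← Finset.sum_subset (Finset.subset_univ (A m n k))
            (fun f _ hf => by rw [hsupp f hf, mul_zero])]
      rw [← Finset.sum_coe_sort (A m n k) (fun f => aU f μ * xt f)]
      refine Finset.sum_congr rfl fun f _ => ?_
      congr 1
      simp only [hxt]
      rw [dif_pos f.2]
    have hU : ∀ μ : P m n, Uop xt μ = 0 := by
      intro μ
      by_cases hμ : μ ∈ A m n (k + 1)
      · have h0 : (T x) ⟨μ, hμ⟩ = 0 := by rw [hx]; rfl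
        rw [hUxt μ]
        exact h0
      · unfold Uop
        apply Finset.sum_eq_zero
        intro f _
        by_cases hfA : f ∈ A m n k
        · rw [up_not_mem hfA hμ, zero_mul]
        · rw [hsupp f hfA, mul_zero]
    have hzero := U_inj hk2 xt hsupp hU
    funext s
    have h3 := hzero (↑s)
    have h4 : xt ↑s = x s := by simp only [hxt]; rw [dif_pos s.2]
    rw [h4] at h3
    simpa using h3
  calc (A m n k).card = Fintype.card ↥(A m n k) := (Fintype.card_coe _).symm
    _ = Module.finrank ℚ (↥(A m n k) → ℚ) := (Module.finrank_pi ℚ).symm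
    _ ≤ Module.finrank ℚ (↥(A m n (k + 1)) → ℚ) :=
        LinearMap.finrank_le_finrank_of_injective hTinj
    _ = Fintype.card ↥(A m n (k + 1)) := Module.finrank_pi ℚ
    _ = (A m n (k + 1)).card := Fintype.card_coe _

end YU


/-- `L(m,n)` is rank-unimodal: writing `p_k` for the number of partitions in
`L(m,n)` (antitone functions `Fin m → Fin (n+1)`) of size `k`, one has
`p_k ≤ p_{k+1}` whenever `2k + 2 ≤ mn`. -/
theorem youngL_rank_unimodal (m n : ℕ) (hm : 0 < m) (hn : 0 < n)
    (k : ℕ) (hk : 2 * k + 2 ≤ m * n) :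
    (Finset.univ.filter fun f : Fin m → Fin (n + 1) =>
      (Antitone fun i => (f i : ℕ)) ∧ ∑ i, (f i : ℕ) = k).card ≤
    (Finset.univ.filter fun f : Fin m → Fin (n + 1) =>
      (Antitone fun i => (f i : ℕ)) ∧ ∑ i, (f i : ℕ) = k + 1).card := by
  exact YU.card_A_le hk
end

section
/- For all positive integers m and n and every positive integer k, if A ⊆ L(m,n) is a union of k antichains of the poset L(m,n), then the cardinality of A is at most the sum of the k largest rank numbers of L(m,n), i.e., |A| ≤ max over k-element subsets S of {0,1,...,mn} of ∑_{s ∈ S} p_s, where p_s = #{λ ∈ L(m,n) : |λ| = s} (L(m,n) has the strong Sperner property). -/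
open scoped Classical

/-- The finite Young lattice `L(m,n)`, modeled as antitone functions
`Fin m → Fin (n+1)`, ordered pointwise. -/
def YoungL (m n : ℕ) := {f : Fin m → Fin (n + 1) // Antitone fun i => (f i : ℕ)}

noncomputable instance (m n : ℕ) : Fintype (YoungL m n) :=
  Subtype.fintype _

instance (m n : ℕ) : PartialOrder (YoungL m n) :=
  Subtype.partialOrder _

/-- The number of partitions in `L(m,n)` of size `s`. -/
noncomputable def youngRankNum (m n s : ℕ) : ℕ :=
  (Finset.univ.filter fun f : YoungL m n => ∑ i, (f.1 i : ℕ) = s).card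

/-!
Proctor's `sl₂` argument. Suppose rank-raising and rank-lowering matrices `E`, `F` on a finite
ranked poset of rank `L` are supported on comparable pairs and satisfy `[E, F] = diag(2ρ - L)`.
Then `E`, `F` and `H = diag(2ρ - L)` form an `sl₂`-triple acting on `X → ℚ`. Since a primitive
vector in a finite-dimensional representation has a natural number as weight, `E` is injective on
every rank level `s` with `2s < L`, and dually `F` is injective on every level with `2s > L`. By
Hall's theorem these injections give matchings along comparable pairs, which move every element
towards the middle level so that each fibre is a chain; hence every antichain injects into the
middle level.

On `L(m,n)`, `E` adds a box in some row and `F` removes one, with the coefficients of the `m`-th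
exterior power of the irreducible `(m+n)`-dimensional `sl₂`-module: row `i` of `λ` is the particle
at position `λᵢ + m - 1 - i`. A union of `k` antichains of `L(m,n)` becomes an antichain of
`L(m,n) × Fin k` once each element is tagged by its height within the union, and the product
carries the Kronecker-sum `sl₂`-structure. Its middle level consists of `k` consecutive rank levels
of `L(m,n)`.
-/

open Matrix Kronecker

attribute [local instance] LieRing.ofAssociativeRing

section

variable {X : Type*} [Fintype X] [DecidableEq X]

theorem Matrix.lie_toLin' (A B : Matrix X X ℚ) : ⁅toLin' A, toLin' B⁆ = toLin' (A * B - B * A) := by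
  rw [LieRing.of_associative_ring_bracket, map_sub, toLin'_mul, toLin'_mul]
  rfl

theorem Matrix.diagonal_mul_sub_mul_diagonal {d : X → ℚ} {M : Matrix X X ℚ} {a : ℚ}
    (hM : ∀ {x y}, M y x ≠ 0 → d y - d x = a) : diagonal d * M - M * diagonal d = a • M := by
  ext y x
  rw [Matrix.sub_apply, diagonal_mul, mul_diagonal, smul_apply, smul_eq_mul]
  by_cases hyx : M y x = 0
  · simp [hyx]
  · rw [mul_comm (M y x), ← sub_mul, hM hyx]

end

theorem Matrix.exists_injective_ne_zero_of_linearIndependent {K α ι : Type*} [Field K]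
    [Fintype α] (M : Matrix α ι K) (hM : LinearIndependent K Mᵀ) :
    ∃ f : ι → α, Function.Injective f ∧ ∀ i, M (f i) i ≠ 0 := by
  let t : ι → Finset α := fun i => {a | M a i ≠ 0}
  suffices hall : ∀ s : Finset ι, s.card ≤ (s.biUnion t).card by
    obtain ⟨f, hf, hft⟩ := (Finset.all_card_le_biUnion_card_iff_exists_injective t).mp hall
    exact ⟨f, hf, fun i => by simpa [t] using hft i⟩
  intro s
  let W := s.biUnion t
  have hcol : ∀ i ∈ s, Function.extend ((↑) : W → α) (fun a => M a i) 0 = Mᵀ i := by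
    intro i hi
    funext a
    by_cases ha : a ∈ W
    · exact Subtype.val_injective.extend_apply _ _ ⟨a, ha⟩
    · rw [Function.extend_apply' _ _ _ (by simpa using ha)]
      by_contra hMa
      exact ha (Finset.mem_biUnion.mpr ⟨i, hi, by simpa [t, eq_comm] using hMa⟩)
  have hli : LinearIndependent K fun i : s => fun a : W => M a i := by
    refine LinearIndependent.of_comp (Function.ExtendByZero.linearMap K ((↑) : W → α)) ?_
    convert hM.comp ((↑) : s → ι) Subtype.val_injective using 1
    funext i
    exact hcol i i.2
  simpa using hli.fintype_card_le_finrank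

theorem Matrix.kroneckerSum_apply_ne_zero {X Y : Type*} [DecidableEq X] [DecidableEq Y]
    {A : Matrix X X ℚ} {B : Matrix Y Y ℚ} {p q : X × Y}
    (h : (A ⊗ₖ 1 + 1 ⊗ₖ B : Matrix (X × Y) (X × Y) ℚ) p q ≠ 0) :
    A p.1 q.1 ≠ 0 ∧ p.2 = q.2 ∨ p.1 = q.1 ∧ B p.2 q.2 ≠ 0 := by
  simp only [add_apply, kroneckerMap_apply, one_apply] at h
  by_contra hc
  by_cases h1 : p.1 = q.1 <;> by_cases h2 : p.2 = q.2 <;> simp_all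

theorem exists_lift_to_rank {X : Type*} [Preorder X] (ρ : X → ℕ) (c : ℕ)
    (hf : ∀ s < c, ∃ f : {x // ρ x = s} → X,
      Function.Injective f ∧ ∀ x, ρ (f x) = s + 1 ∧ ↑x ≤ f x) :
    ∃ Φ : X → X, ∀ x, ρ x ≤ c →
      ρ (Φ x) = c ∧ x ≤ Φ x ∧ ∀ y, ρ y ≤ c → Φ x = Φ y → x ≤ y ∨ y ≤ x := by
  induction c with
  | zero => exact ⟨id, fun x hx => ⟨by simpa using hx, le_rfl, fun y _ hxy => Or.inl hxy.le⟩⟩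
  | succ c ih =>
    obtain ⟨Φ, hΦ⟩ := ih fun s hs => hf s (by omega)
    obtain ⟨f, hf_inj, hfc⟩ := hf c (by omega)
    refine ⟨fun x => if hx : ρ x ≤ c then f ⟨Φ x, (hΦ x hx).1⟩ else x, fun x hx => ?_⟩
    by_cases hxc : ρ x ≤ c
    · obtain ⟨hρΦ, hxΦ, hcomp⟩ := hΦ x hxc
      have hfΦ := hfc ⟨Φ x, hρΦ⟩
      simp only [dif_pos hxc]
      refine ⟨hfΦ.1, hxΦ.trans hfΦ.2, fun y hy hxy => ?_⟩
      by_cases hyc : ρ y ≤ c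
      · simp only [dif_pos hyc] at hxy
        exact hcomp y hyc (congrArg Subtype.val (hf_inj hxy))
      · simp only [dif_neg hyc] at hxy
        exact Or.inl (hxy ▸ hxΦ.trans hfΦ.2)
    · simp only [dif_neg hxc]
      refine ⟨by omega, le_rfl, fun y hy hxy => ?_⟩
      by_cases hyc : ρ y ≤ c
      · simp only [dif_pos hyc] at hxy
        exact Or.inr (hxy ▸ (hΦ y hyc).2.1.trans (hfc ⟨Φ y, (hΦ y hyc).1⟩).2)
      · simp only [dif_neg hyc] at hxy
        exact Or.inl hxy.le

structure IsRankedSl2 {X : Type*} [Fintype X] [DecidableEq X] (ρ : X → ℕ) (L : ℕ)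
    (E F : Matrix X X ℚ) : Prop where
  rank_le : ∀ x, ρ x ≤ L
  raise : ∀ {x y}, E y x ≠ 0 → ρ y = ρ x + 1
  lower : ∀ {x y}, F x y ≠ 0 → ρ y = ρ x + 1
  lie : E * F - F * E = diagonal fun x => 2 * (ρ x : ℚ) - L

namespace IsRankedSl2

variable {X Y : Type*} [Fintype X] [DecidableEq X] [Fintype Y] [DecidableEq Y]
  {ρ : X → ℕ} {σ : Y → ℕ} {L M : ℕ} {E F : Matrix X X ℚ} {E' F' : Matrix Y Y ℚ}

theorem swap (h : IsRankedSl2 ρ L E F) : IsRankedSl2 (fun x => L - ρ x) L F E where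
  rank_le x := Nat.sub_le _ _
  raise {x y} hF := by
    have := h.lower hF
    have := h.rank_le x
    omega
  lower {x y} hE := by
    have := h.raise hE
    have := h.rank_le x
    omega
  lie := by
    rw [← neg_sub, h.lie, diagonal_neg]
    congr 1
    funext x
    rw [Nat.cast_sub (h.rank_le x)]
    ring

theorem prod (h : IsRankedSl2 ρ L E F) (h' : IsRankedSl2 σ M E' F') :
    IsRankedSl2 (fun p : X × Y => ρ p.1 + σ p.2) (L + M) (E ⊗ₖ 1 + 1 ⊗ₖ E') (F ⊗ₖ 1 + 1 ⊗ₖ F') where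
  rank_le p := add_le_add (h.rank_le _) (h'.rank_le _)
  raise hE := by
    rcases kroneckerSum_apply_ne_zero hE with ⟨h1, h2⟩ | ⟨h1, h2⟩
    · have := h.raise h1; rw [h2]; omega
    · have := h'.raise h2; rw [h1]; omega
  lower hF := by
    rcases kroneckerSum_apply_ne_zero hF with ⟨h1, h2⟩ | ⟨h1, h2⟩
    · have := h.lower h1; rw [h2]; omega
    · have := h'.lower h2; rw [h1]; omega
  lie := by
    calc (E ⊗ₖ 1 + 1 ⊗ₖ E') * (F ⊗ₖ 1 + 1 ⊗ₖ F') - (F ⊗ₖ 1 + 1 ⊗ₖ F') * (E ⊗ₖ 1 + 1 ⊗ₖ E')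
        = (diagonal fun x => 2 * (ρ x : ℚ) - L) ⊗ₖ 1 +
            1 ⊗ₖ (diagonal fun y => 2 * (σ y : ℚ) - M) := by
          simp only [add_mul, mul_add, ← mul_kronecker_mul, Matrix.one_mul, Matrix.mul_one,
            sub_eq_iff_eq_add.mp h.lie, sub_eq_iff_eq_add.mp h'.lie, add_kronecker, kronecker_add]
          abel
      _ = _ := by
          rw [← diagonal_one, diagonal_kronecker_diagonal, ← diagonal_one,
            diagonal_kronecker_diagonal, diagonal_add]
          congr 1
          funext p
          push_cast
          ring

theorem isSl2Triple (h : IsRankedSl2 ρ L E F)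
    (hH : (diagonal fun x => 2 * (ρ x : ℚ) - L) ≠ 0) :
    IsSl2Triple (toLin' (diagonal fun x => 2 * (ρ x : ℚ) - L)) (toLin' E) (toLin' F) where
  h_ne_zero := by simpa using hH
  lie_e_f := by rw [lie_toLin', h.lie]
  lie_h_e_nsmul := by
    rw [lie_toLin', diagonal_mul_sub_mul_diagonal (a := 2) fun hE => ?_, map_smul]
    · module
    rw [h.raise hE]
    push_cast
    ring
  lie_h_f_nsmul := by
    rw [lie_toLin', diagonal_mul_sub_mul_diagonal (a := -2) fun hF => ?_, map_smul]
    · module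
    rw [h.lower hF]
    push_cast
    ring

theorem eq_zero_of_mulVec_eq_zero (h : IsRankedSl2 ρ L E F) {s : ℕ} (hs : 2 * s < L)
    {v : X → ℚ} (hv : ∀ x, v x ≠ 0 → ρ x = s) (hEv : E *ᵥ v = 0) : v = 0 := by
  by_contra hv0
  have hsL : (2 * s : ℚ) < L := by exact_mod_cast hs
  have hHv : (diagonal fun x => 2 * (ρ x : ℚ) - L) *ᵥ v = (2 * (s : ℚ) - L) • v := by
    funext x
    rw [mulVec_diagonal, Pi.smul_apply, smul_eq_mul]
    by_cases hx : v x = 0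
    · simp [hx]
    · rw [hv x hx]
  have hH : (diagonal fun x => 2 * (ρ x : ℚ) - L) ≠ 0 := by
    intro hH
    rw [hH, zero_mulVec, eq_comm, smul_eq_zero] at hHv
    exact hv0 (hHv.resolve_left (by linarith))
  obtain ⟨n, hn⟩ := (IsSl2Triple.HasPrimitiveVectorWith.mk (t := h.isSl2Triple hH) hv0
    (by simpa using hHv) (by simpa using hEv)).exists_nat
  have : (0 : ℚ) ≤ n := n.cast_nonneg
  linarith

theorem linearIndependent_cols (h : IsRankedSl2 ρ L E F) {s : ℕ} (hs : 2 * s < L) :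
    LinearIndependent ℚ fun x : {x // ρ x = s} => Eᵀ x := by
  rw [Fintype.linearIndependent_iff]
  intro g hg x
  let v : X → ℚ := fun y => if hy : ρ y = s then g ⟨y, hy⟩ else 0
  have hv : ∀ y, v y ≠ 0 → ρ y = s := fun y hy => by
    by_contra hys
    simp [v, hys] at hy
  have hEv : E *ᵥ v = 0 := by
    rw [← hg]
    funext a
    simp only [v, mulVec, dotProduct, mul_dite, mul_zero, Finset.sum_dite, Finset.sum_const_zero,
      add_zero, Finset.sum_apply, Pi.smul_apply, transpose_apply, smul_eq_mul, mul_comm (g _)]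
    exact Fintype.sum_equiv (Equiv.subtypeEquivRight (by simp)) _ _ fun _ => rfl
  simpa [v, x.2] using congrFun (h.eq_zero_of_mulVec_eq_zero hs hv hEv) x

theorem exists_injective_raise (h : IsRankedSl2 ρ L E F) {s : ℕ} (hs : 2 * s < L) :
    ∃ f : {x // ρ x = s} → X, Function.Injective f ∧ ∀ x, E (f x) x ≠ 0 :=
  exists_injective_ne_zero_of_linearIndependent (fun y (x : {x // ρ x = s}) => E y x)
    (h.linearIndependent_cols hs)

theorem exists_map_to_middle [Preorder X] (h : IsRankedSl2 ρ L E F)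
    (hE : ∀ {x y}, E y x ≠ 0 → x ≤ y) (hF : ∀ {x y}, F x y ≠ 0 → x ≤ y) :
    ∃ Θ : X → X, (∀ x, ρ (Θ x) = (L + 1) / 2) ∧ ∀ x y, Θ x = Θ y → x ≤ y ∨ y ≤ x := by
  set c := (L + 1) / 2
  obtain ⟨Φ, hΦ⟩ := exists_lift_to_rank ρ c fun s hs => by
    obtain ⟨f, hf, hEf⟩ := h.exists_injective_raise (s := s) (by omega)
    exact ⟨f, hf, fun x => ⟨x.2 ▸ h.raise (hEf x), hE (hEf x)⟩⟩
  obtain ⟨Ψ, hΨ⟩ := exists_lift_to_rank (X := Xᵒᵈ) (fun x => L - ρ x) (L - c)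
    fun s hs => by
      obtain ⟨f, hf, hFf⟩ := h.swap.exists_injective_raise (s := s) (by omega)
      exact ⟨f, hf, fun x => ⟨x.2 ▸ h.swap.raise (hFf x), hF (hFf x)⟩⟩
  have hρΨ : ∀ x, c < ρ x → ρ (Ψ x) = c := fun x hx => by
    have := (hΨ x (by omega)).1
    have := h.rank_le (Ψ x)
    have := h.rank_le x
    omega
  have key : ∀ x y, ρ x ≤ c → c < ρ y → Φ x = Ψ y → x ≤ y := fun x y hx hy hxy =>
    (hΦ x hx).2.1.trans (hxy ▸ (hΨ y (by have := h.rank_le y; omega)).2.1)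
  refine ⟨fun x => if ρ x ≤ c then Φ x else Ψ x, fun x => ?_, fun x y hxy => ?_⟩
  · by_cases hx : ρ x ≤ c
    · simp only [hx, ↓reduceIte, (hΦ x hx).1]
    · simp only [hx, ↓reduceIte, hρΨ x (by omega)]
  by_cases hx : ρ x ≤ c <;> by_cases hy : ρ y ≤ c <;> simp only [hx, hy, ↓reduceIte] at hxy
  · exact (hΦ x hx).2.2 y hy hxy
  · exact Or.inl (key x y hx (by omega) hxy)
  · exact Or.inr (key y x hy (by omega) hxy.symm)
  · exact ((hΨ x (by omega)).2.2 y (by omega) hxy).symm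

theorem card_le_of_isAntichain [Preorder X] (h : IsRankedSl2 ρ L E F)
    (hE : ∀ {x y}, E y x ≠ 0 → x ≤ y) (hF : ∀ {x y}, F x y ≠ 0 → x ≤ y)
    {A : Finset X} (hA : IsAntichain (· ≤ ·) (A : Set X)) :
    A.card ≤ (Finset.univ.filter fun x => ρ x = (L + 1) / 2).card := by
  obtain ⟨Θ, hΘ, hcomp⟩ := h.exists_map_to_middle hE hF
  refine Finset.card_le_card_of_injOn Θ (fun x _ => by simp [hΘ x]) fun x hx y hy hxy => ?_
  rcases hcomp x y hxy with hle | hle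
  · exact hA.eq hx hy hle
  · exact (hA.eq hy hx hle).symm

end IsRankedSl2

-- `F eⱼ = lowerCoeff N j • eⱼ₋₁` in the irreducible `N`-dimensional `sl₂`-module with basis
-- `e₀, …, e_{N-1}` and `E eⱼ = eⱼ₊₁`.
def lowerCoeff (N j : ℕ) : ℚ := j * (N - j)

theorem lowerCoeff_sub_lowerCoeff_succ (N j : ℕ) :
    lowerCoeff N j - lowerCoeff N (j + 1) = 2 * j + 1 - N := by
  simp only [lowerCoeff]; push_cast; ring

@[simp] theorem lowerCoeff_zero (N : ℕ) : lowerCoeff N 0 = 0 := by simp [lowerCoeff]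

@[simp] theorem lowerCoeff_self (N : ℕ) : lowerCoeff N N = 0 := by simp [lowerCoeff]

noncomputable def chainRaise (k : ℕ) : Matrix (Fin k) (Fin k) ℚ :=
  fun y x => if (y : ℕ) = x + 1 then 1 else 0

noncomputable def chainLower (k : ℕ) : Matrix (Fin k) (Fin k) ℚ :=
  fun y x => if (x : ℕ) = y + 1 then lowerCoeff k x else 0

theorem chainRaise_mul_chainLower (k : ℕ) :
    chainRaise k * chainLower k = diagonal fun x : Fin k => lowerCoeff k x := by
  ext y x
  simp only [mul_apply, chainRaise, chainLower, ite_zero_mul_ite_zero, one_mul]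
  rw [Fintype.sum_ite_eq_ite_exists _ fun z z' hz hz' => Fin.ext (by omega)]
  by_cases hyx : y = x
  · subst hyx
    rw [diagonal_apply_eq]
    split_ifs with h
    · rfl
    · have : (y : ℕ) = 0 := by
        by_contra hy
        exact h ⟨⟨y - 1, by omega⟩, by simp; omega⟩
      simp [this]
  · rw [diagonal_apply_ne _ hyx, if_neg fun ⟨z, hy, hx⟩ => hyx (Fin.ext (by omega))]

theorem chainLower_mul_chainRaise (k : ℕ) :
    chainLower k * chainRaise k = diagonal fun x : Fin k => lowerCoeff k (x + 1) := by
  ext y x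
  simp only [mul_apply, chainRaise, chainLower, ite_zero_mul_ite_zero, mul_one]
  rw [Finset.sum_congr rfl fun z _ => ite_congr rfl (fun hz => by rw [hz.2]) fun _ => rfl,
    Fintype.sum_ite_eq_ite_exists _ fun z z' hz hz' => Fin.ext (by omega)]
  by_cases hyx : y = x
  · subst hyx
    rw [diagonal_apply_eq]
    split_ifs with h
    · rfl
    · have : (y : ℕ) + 1 = k := by
        by_contra hy
        exact h ⟨⟨y + 1, by omega⟩, rfl, rfl⟩
      simp [this]
  · rw [diagonal_apply_ne _ hyx, if_neg fun ⟨z, hy, hx⟩ => hyx (Fin.ext (by omega))]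

theorem isRankedSl2_chain (k : ℕ) :
    IsRankedSl2 (fun x : Fin k => (x : ℕ)) (k - 1) (chainRaise k) (chainLower k) where
  rank_le x := by omega
  raise {x y} h := by
    by_contra hxy
    exact h (if_neg hxy)
  lower {x y} h := by
    by_contra hxy
    exact h (if_neg hxy)
  lie := by
    rw [chainRaise_mul_chainLower, chainLower_mul_chainRaise, diagonal_sub]
    congr 1
    funext x
    rw [lowerCoeff_sub_lowerCoeff_succ, Nat.cast_sub (by have := x.2; omega)]
    ring

theorem Fin.antitone_update {m : ℕ} {r : Fin m → ℕ} (hr : Antitone r) {i : Fin m} {v : ℕ}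
    (hlt : ∀ j < i, v ≤ r j) (hgt : ∀ j, i < j → r j ≤ v) : Antitone (Function.update r i v) := by
  intro a b hab
  by_cases ha : a = i <;> by_cases hb : b = i
  · subst ha hb; simp
  · subst ha; simpa [hb] using hgt b (lt_of_le_of_ne hab (Ne.symm hb))
  · subst hb; simpa [ha] using hlt a (lt_of_le_of_ne hab ha)
  · simpa [ha, hb] using hr hab

namespace YoungL

variable {m n : ℕ}

def row (x : YoungL m n) (i : Fin m) : ℕ := x.1 i

theorem row_le (x : YoungL m n) (i : Fin m) : x.row i ≤ n :=
  Nat.lt_succ_iff.mp (x.1 i).2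

theorem row_antitone (x : YoungL m n) : Antitone x.row :=
  x.2

theorem ext_row {x y : YoungL m n} (h : ∀ i, x.row i = y.row i) : x = y :=
  Subtype.ext (funext fun i => Fin.ext (h i))

theorem le_iff_row_le {x y : YoungL m n} : x ≤ y ↔ ∀ i, x.row i ≤ y.row i :=
  Iff.rfl

def size (x : YoungL m n) : ℕ := ∑ i, x.row i

theorem size_le (x : YoungL m n) : x.size ≤ m * n := by
  refine (Finset.sum_le_sum fun i _ => x.row_le i).trans ?_
  simp

def ofRows (r : Fin m → ℕ) (hr : Antitone r) (hrn : ∀ i, r i ≤ n) : YoungL m n :=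
  ⟨fun i => ⟨r i, Nat.lt_succ_of_le (hrn i)⟩, hr⟩

@[simp]
theorem row_ofRows (r : Fin m → ℕ) (hr : Antitone r) (hrn : ∀ i, r i ≤ n) :
    (ofRows r hr hrn).row = r :=
  rfl

def AddsBox (i : Fin m) (x y : YoungL m n) : Prop :=
  y.row i = x.row i + 1 ∧ ∀ j ≠ i, y.row j = x.row j

namespace AddsBox

variable {i : Fin m} {x x' y y' : YoungL m n}

theorem right_unique (h : AddsBox i x y) (h' : AddsBox i x y') : y = y' :=
  ext_row fun j => by
    by_cases hj : j = i
    · subst hj; rw [h.1, h'.1]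
    · rw [h.2 j hj, h'.2 j hj]

theorem left_unique (h : AddsBox i x y) (h' : AddsBox i x' y) : x = x' :=
  ext_row fun j => by
    by_cases hj : j = i
    · subst hj; have := h.1; have := h'.1; omega
    · rw [← h.2 j hj, h'.2 j hj]

theorem le (h : AddsBox i x y) : x ≤ y :=
  le_iff_row_le.mpr fun j => by
    by_cases hj : j = i
    · subst hj; rw [h.1]; omega
    · rw [h.2 j hj]

theorem size_eq (h : AddsBox i x y) : y.size = x.size + 1 := by
  have : ∀ j, y.row j = x.row j + if j = i then 1 else 0 := fun j => by
    by_cases hj : j = i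
    · subst hj; simp [h.1]
    · simp [hj, h.2 j hj]
  simp [size, this, Finset.sum_add_distrib]

end AddsBox

theorem exists_addsBox_iff {i : Fin m} {x : YoungL m n} :
    (∃ y, AddsBox i x y) ↔ x.row i < n ∧ ∀ j < i, x.row i < x.row j := by
  constructor
  · rintro ⟨y, hyi, hy⟩
    refine ⟨by have := y.row_le i; omega, fun j hj => ?_⟩
    have := y.row_antitone hj.le
    rw [hy j hj.ne] at this
    omega
  · rintro ⟨hin, hlt⟩
    have hr := Fin.antitone_update x.row_antitone (i := i) (v := x.row i + 1) (fun j hj => hlt j hj)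
      fun j hj => (x.row_antitone hj.le).trans (Nat.le_succ _)
    refine ⟨ofRows _ hr fun j => ?_, by simp, fun j hj => by simp [hj]⟩
    by_cases hj : j = i
    · subst hj; simpa using hin
    · simpa [hj] using x.row_le j

theorem exists_addsBox_to_iff {i : Fin m} {x : YoungL m n} :
    (∃ z, AddsBox i z x) ↔ 0 < x.row i ∧ ∀ j, i < j → x.row j < x.row i := by
  constructor
  · rintro ⟨z, hxi, hx⟩
    refine ⟨by omega, fun j hj => ?_⟩
    have := z.row_antitone hj.le
    rw [← hx j hj.ne'] at this
    omega
  · rintro ⟨hpos, hgt⟩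
    have hr := Fin.antitone_update x.row_antitone (i := i) (v := x.row i - 1)
      (fun j hj => by have := x.row_antitone hj.le; omega) fun j hj => by have := hgt j hj; omega
    refine ⟨ofRows _ hr fun j => ?_, by simp; omega, fun j hj => by simp [hj]⟩
    by_cases hj : j = i
    · subst hj; simpa using (Nat.sub_le _ _).trans (x.row_le j)
    · simpa [hj] using x.row_le j

theorem exists_addsBox_addsBox_comm {i i' : Fin m} (hii' : i ≠ i') {x y : YoungL m n} :
    (∃ z, AddsBox i z y ∧ AddsBox i' z x) ↔ ∃ w, AddsBox i' y w ∧ AddsBox i x w := by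
  constructor
  · rintro ⟨z, hy, hx⟩
    refine ⟨ofRows (fun j => max (x.row j) (y.row j)) (x.row_antitone.max y.row_antitone)
      fun j => max_le (x.row_le j) (y.row_le j), ⟨?_, fun j hj => ?_⟩, ⟨?_, fun j hj => ?_⟩⟩ <;>
    simp only [row_ofRows] <;>
    grind [AddsBox]
  · rintro ⟨w, hy, hx⟩
    refine ⟨ofRows (fun j => min (x.row j) (y.row j)) (x.row_antitone.min y.row_antitone)
      fun j => (min_le_left _ _).trans (x.row_le j), ⟨?_, fun j hj => ?_⟩, ⟨?_, fun j hj => ?_⟩⟩ <;>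
    simp only [row_ofRows] <;>
    grind [AddsBox]

def shiftedRow (x : YoungL m n) (i : Fin m) : ℕ := x.row i + (m - 1 - i)

theorem AddsBox.shiftedRow_self {i : Fin m} {x y : YoungL m n} (h : AddsBox i x y) :
    y.shiftedRow i = x.shiftedRow i + 1 := by
  simp only [shiftedRow, h.1]; omega

theorem AddsBox.shiftedRow_of_ne {i j : Fin m} {x y : YoungL m n} (h : AddsBox i x y) (hj : j ≠ i) :
    y.shiftedRow j = x.shiftedRow j := by
  simp only [shiftedRow, h.2 j hj]

noncomputable def raiseOp (i : Fin m) : Matrix (YoungL m n) (YoungL m n) ℚ :=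
  fun y x => if AddsBox i x y then 1 else 0

noncomputable def lowerOp (i : Fin m) : Matrix (YoungL m n) (YoungL m n) ℚ :=
  fun y x => if AddsBox i y x then lowerCoeff (m + n) (x.shiftedRow i) else 0

theorem raiseOp_mul_lowerOp_apply (i i' : Fin m) (y x : YoungL m n) :
    (raiseOp i * lowerOp i' : Matrix (YoungL m n) (YoungL m n) ℚ) y x =
      if ∃ z, AddsBox i z y ∧ AddsBox i' z x then lowerCoeff (m + n) (x.shiftedRow i') else 0 := by
  simp only [Matrix.mul_apply, raiseOp, lowerOp, ite_zero_mul_ite_zero, one_mul]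
  exact Fintype.sum_ite_eq_ite_exists _ (fun z z' hz hz' => hz.1.left_unique hz'.1) _

theorem lowerOp_mul_raiseOp_apply (i i' : Fin m) (y x : YoungL m n) :
    (lowerOp i' * raiseOp i : Matrix (YoungL m n) (YoungL m n) ℚ) y x =
      if ∃ w, AddsBox i' y w ∧ AddsBox i x w then
        lowerCoeff (m + n) (x.shiftedRow i' + if i' = i then 1 else 0) else 0 := by
  simp only [Matrix.mul_apply, raiseOp, lowerOp, ite_zero_mul_ite_zero, mul_one]
  rw [← Fintype.sum_ite_eq_ite_exists _ fun w w' hw hw' => hw.2.right_unique hw'.2]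
  refine Finset.sum_congr rfl fun w _ => ite_congr rfl (fun hw => ?_) fun _ => rfl
  split_ifs with h
  · subst h; rw [hw.2.shiftedRow_self]
  · rw [hw.2.shiftedRow_of_ne h, add_zero]

theorem raiseOp_mul_lowerOp_of_ne {i i' : Fin m} (h : i ≠ i') :
    (raiseOp i * lowerOp i' : Matrix (YoungL m n) (YoungL m n) ℚ) = lowerOp i' * raiseOp i := by
  ext y x
  simp only [raiseOp_mul_lowerOp_apply, lowerOp_mul_raiseOp_apply, if_neg h.symm, add_zero,
    exists_addsBox_addsBox_comm h]

theorem raiseOp_mul_lowerOp_sub_lowerOp_mul_raiseOp (i : Fin m) :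
    (raiseOp i * lowerOp i - lowerOp i * raiseOp i : Matrix (YoungL m n) (YoungL m n) ℚ) =
      Matrix.diagonal fun x =>
        (if ∃ z, AddsBox i z x then lowerCoeff (m + n) (x.shiftedRow i) else 0) -
          if ∃ w, AddsBox i x w then lowerCoeff (m + n) (x.shiftedRow i + 1) else 0 := by
  ext y x
  rw [Matrix.sub_apply, raiseOp_mul_lowerOp_apply, lowerOp_mul_raiseOp_apply, if_pos rfl]
  by_cases hyx : y = x
  · subst hyx
    simp
  · rw [Matrix.diagonal_apply_ne _ hyx,
      if_neg fun ⟨z, hy, hx⟩ => hyx (hy.right_unique hx),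
      if_neg fun ⟨w, hy, hx⟩ => hyx (hy.left_unique hx), sub_zero]

theorem exists_addsBox_to_castSucc_iff {x : YoungL (m + 1) n} {i : Fin m} :
    (∃ z, AddsBox i.castSucc z x) ↔ x.row i.succ < x.row i.castSucc := by
  rw [exists_addsBox_to_iff]
  refine ⟨fun h => h.2 _ i.castSucc_lt_succ, fun h => ⟨by omega, fun j hj => ?_⟩⟩
  exact (x.row_antitone (Fin.castSucc_lt_iff_succ_le.mp hj)).trans_lt h

theorem exists_addsBox_succ_iff {x : YoungL (m + 1) n} {i : Fin m} :
    (∃ w, AddsBox i.succ x w) ↔ x.row i.succ < x.row i.castSucc := by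
  rw [exists_addsBox_iff]
  refine ⟨fun h => h.2 _ i.castSucc_lt_succ, fun h => ⟨?_, fun j hj => ?_⟩⟩
  · exact h.trans_le (x.row_le _)
  · exact h.trans_le (x.row_antitone (Fin.le_castSucc_iff.mpr hj))

theorem sum_ite_exists_addsBox_to (x : YoungL (m + 1) n) :
    ∑ i, (if ∃ z, AddsBox i z x then lowerCoeff (m + 1 + n) (x.shiftedRow i) else 0) =
      ∑ i, lowerCoeff (m + 1 + n) (x.shiftedRow i) -
        ∑ i : Fin m, if x.row i.succ < x.row i.castSucc then 0 else
          lowerCoeff (m + 1 + n) (x.shiftedRow i.castSucc) := by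
  rw [eq_sub_iff_add_eq, Fin.sum_univ_castSucc, Fin.sum_univ_castSucc, add_right_comm,
    ← Finset.sum_add_distrib]
  congr 1
  · refine Finset.sum_congr rfl fun i _ => ?_
    simp only [exists_addsBox_to_castSucc_iff]
    split_ifs <;> simp
  · split_ifs with h
    · rfl
    · have : x.shiftedRow (Fin.last m) = 0 := by
        rw [exists_addsBox_to_iff] at h
        simp only [shiftedRow, Fin.val_last]
        grind [Fin.le_last]
      simp [this]

theorem sum_ite_exists_addsBox (x : YoungL (m + 1) n) :
    ∑ i, (if ∃ w, AddsBox i x w then lowerCoeff (m + 1 + n) (x.shiftedRow i + 1) else 0) =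
      ∑ i, lowerCoeff (m + 1 + n) (x.shiftedRow i + 1) -
        ∑ i : Fin m, if x.row i.succ < x.row i.castSucc then 0 else
          lowerCoeff (m + 1 + n) (x.shiftedRow i.castSucc) := by
  rw [eq_sub_iff_add_eq, Fin.sum_univ_succ, Fin.sum_univ_succ, add_assoc, ← Finset.sum_add_distrib]
  congr 1
  · split_ifs with h
    · rfl
    · have : x.shiftedRow 0 + 1 = m + 1 + n := by
        rw [exists_addsBox_iff] at h
        have := x.row_le 0
        simp only [shiftedRow, Fin.val_zero]
        grind [Fin.not_lt_zero]
      simp [this]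
  · refine Finset.sum_congr rfl fun i _ => ?_
    simp only [exists_addsBox_succ_iff]
    split_ifs with h
    · simp
    · have := x.row_antitone i.castSucc_lt_succ.le
      have : x.shiftedRow i.castSucc = x.shiftedRow i.succ + 1 := by
        simp only [shiftedRow, Fin.val_castSucc, Fin.val_succ]
        omega
      simp [this]

theorem sum_shiftedRow_mul_two (x : YoungL m n) :
    (∑ i, x.shiftedRow i) * 2 = x.size * 2 + m * (m - 1) := by
  rw [size, ← Finset.sum_range_id_mul_two, ← Finset.sum_range_reflect, ← add_mul,
    ← Fin.sum_univ_eq_sum_range (fun i => m - 1 - i), ← Finset.sum_add_distrib]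
  rfl

theorem sum_ite_exists_addsBox_to_sub_ite_exists_addsBox (x : YoungL m n) :
    ∑ i, ((if ∃ z, AddsBox i z x then lowerCoeff (m + n) (x.shiftedRow i) else 0) -
        if ∃ w, AddsBox i x w then lowerCoeff (m + n) (x.shiftedRow i + 1) else 0) =
      2 * (x.size : ℚ) - (m * n : ℕ) := by
  cases m with
  | zero => simp [size]
  | succ m =>
    rw [Finset.sum_sub_distrib, sum_ite_exists_addsBox_to, sum_ite_exists_addsBox,
      sub_sub_sub_cancel_right, ← Finset.sum_sub_distrib]
    simp only [lowerCoeff_sub_lowerCoeff_succ]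
    have h := sum_shiftedRow_mul_two x
    rw [Nat.add_sub_cancel] at h
    have hq : (∑ i, (x.shiftedRow i : ℚ)) * 2 = x.size * 2 + (m + 1) * m := by exact_mod_cast h
    simp only [Finset.sum_sub_distrib, Finset.sum_add_distrib, ← Finset.mul_sum, Finset.sum_const,
      Finset.card_univ, Fintype.card_fin, nsmul_eq_mul]
    push_cast
    linear_combination hq

noncomputable def raise : Matrix (YoungL m n) (YoungL m n) ℚ := ∑ i, raiseOp i

noncomputable def lower : Matrix (YoungL m n) (YoungL m n) ℚ := ∑ i, lowerOp i

theorem exists_addsBox_of_raise_ne_zero {x y : YoungL m n} (h : raise y x ≠ 0) :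
    ∃ i, AddsBox i x y := by
  rw [raise, Matrix.sum_apply] at h
  obtain ⟨i, -, hi⟩ := Finset.exists_ne_zero_of_sum_ne_zero h
  exact ⟨i, by_contra fun hxy => hi (if_neg hxy)⟩

theorem exists_addsBox_of_lower_ne_zero {x y : YoungL m n} (h : lower x y ≠ 0) :
    ∃ i, AddsBox i x y := by
  rw [lower, Matrix.sum_apply] at h
  obtain ⟨i, -, hi⟩ := Finset.exists_ne_zero_of_sum_ne_zero h
  exact ⟨i, by_contra fun hxy => hi (if_neg hxy)⟩

theorem raise_mul_lower_sub_lower_mul_raise :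
    (raise * lower - lower * raise : Matrix (YoungL m n) (YoungL m n) ℚ) =
      Matrix.diagonal fun x => 2 * (x.size : ℚ) - (m * n : ℕ) := by
  have hcomm : ∀ i, ∑ j, (raiseOp i * lowerOp j - lowerOp j * raiseOp i :
      Matrix (YoungL m n) (YoungL m n) ℚ) = raiseOp i * lowerOp i - lowerOp i * raiseOp i :=
    fun i => Fintype.sum_eq_single i fun j hj => sub_eq_zero.mpr (raiseOp_mul_lowerOp_of_ne hj.symm)
  have hFE : (lower * raise : Matrix (YoungL m n) (YoungL m n) ℚ) =
      ∑ i, ∑ j, lowerOp j * raiseOp i := by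
    rw [lower, raise, Finset.sum_mul_sum, Finset.sum_comm]
  rw [hFE, raise, lower, Finset.sum_mul_sum, ← Finset.sum_sub_distrib]
  simp only [← Finset.sum_sub_distrib, hcomm, raiseOp_mul_lowerOp_sub_lowerOp_mul_raiseOp]
  ext y x
  rw [Matrix.sum_apply]
  by_cases hyx : y = x
  · subst hyx
    simp only [Matrix.diagonal_apply_eq]
    exact sum_ite_exists_addsBox_to_sub_ite_exists_addsBox y
  · simp [Matrix.diagonal_apply_ne _ hyx]

theorem isRankedSl2 : IsRankedSl2 size (m * n) (raise : Matrix (YoungL m n) _ ℚ) lower where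
  rank_le := size_le
  raise h := (exists_addsBox_of_raise_ne_zero h).choose_spec.size_eq
  lower h := (exists_addsBox_of_lower_ne_zero h).choose_spec.size_eq
  lie := raise_mul_lower_sub_lower_mul_raise

theorem le_of_raise_kroneckerSum_ne_zero {k : ℕ} {p q : YoungL m n × Fin k}
    (h : (raise ⊗ₖ 1 + 1 ⊗ₖ chainRaise k : Matrix (YoungL m n × Fin k) _ ℚ) q p ≠ 0) : p ≤ q := by
  rcases kroneckerSum_apply_ne_zero h with ⟨h1, h2⟩ | ⟨h1, h2⟩
  · exact Prod.le_def.mpr ⟨(exists_addsBox_of_raise_ne_zero h1).choose_spec.le, h2.ge⟩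
  · have := (isRankedSl2_chain k).raise h2
    exact Prod.le_def.mpr ⟨h1.ge, Fin.le_def.mpr (by omega)⟩

theorem le_of_lower_kroneckerSum_ne_zero {k : ℕ} {p q : YoungL m n × Fin k}
    (h : (lower ⊗ₖ 1 + 1 ⊗ₖ chainLower k : Matrix (YoungL m n × Fin k) _ ℚ) p q ≠ 0) : p ≤ q := by
  rcases kroneckerSum_apply_ne_zero h with ⟨h1, h2⟩ | ⟨h1, h2⟩
  · exact Prod.le_def.mpr ⟨(exists_addsBox_of_lower_ne_zero h1).choose_spec.le, h2.le⟩
  · have := (isRankedSl2_chain k).lower h2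
    exact Prod.le_def.mpr ⟨h1.le, Fin.le_def.mpr (by omega)⟩

end YoungL

section UnionOfAntichains

variable {X : Type*} [PartialOrder X] {k : ℕ} (C : Fin k → Finset X)

noncomputable def antichainHeight (x : X) : ℕ :=
  (Finset.univ.filter fun i => ∃ z ∈ C i, z < x).card

variable {C}

theorem antichainHeight_lt (hC : ∀ i, IsAntichain (· ≤ ·) (C i : Set X)) {i : Fin k} {x : X}
    (hx : x ∈ C i) : antichainHeight C x < k := by
  refine (Finset.card_lt_card (Finset.filter_ssubset.mpr ⟨i, Finset.mem_univ _, ?_⟩)).trans_le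
    (by simp)
  rintro ⟨z, hz, hzx⟩
  exact hC i hz hx hzx.ne hzx.le

theorem antichainHeight_lt_antichainHeight (hC : ∀ i, IsAntichain (· ≤ ·) (C i : Set X)) {i : Fin k}
    {x y : X} (hx : x ∈ C i) (hxy : x < y) : antichainHeight C x < antichainHeight C y := by
  refine Finset.card_lt_card (Finset.ssubset_iff_of_subset ?_ |>.mpr ⟨i, ?_, ?_⟩)
  · intro j hj
    obtain ⟨z, hz, hzx⟩ := (Finset.mem_filter.mp hj).2
    exact Finset.mem_filter.mpr ⟨Finset.mem_univ _, z, hz, hzx.trans hxy⟩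
  · exact Finset.mem_filter.mpr ⟨Finset.mem_univ _, x, hx, hxy⟩
  · rintro hi
    obtain ⟨z, hz, hzx⟩ := (Finset.mem_filter.mp hi).2
    exact hC i hz hx hzx.ne hzx.le

theorem exists_isAntichain_prod_fin (hC : ∀ i, IsAntichain (· ≤ ·) (C i : Set X))
    (A : Finset X) (hA : ∀ x ∈ A, ∃ i, x ∈ C i) :
    ∃ A' : Finset (X × Fin k), IsAntichain (· ≤ ·) (A' : Set (X × Fin k)) ∧ A'.card = A.card := by
  have hlt : ∀ x : A, antichainHeight C x < k := fun x =>
    (hA x x.2).elim fun i hi => antichainHeight_lt hC hi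
  let f : A → X × Fin k := fun x => (x, Fin.rev ⟨antichainHeight C x, hlt x⟩)
  refine ⟨Finset.univ.image f, ?_, ?_⟩
  · rintro _ hp _ hq hpq hle
    obtain ⟨x, -, rfl⟩ := Finset.mem_image.mp hp
    obtain ⟨y, -, rfl⟩ := Finset.mem_image.mp hq
    simp only [f, Prod.mk_le_mk, Fin.rev_le_rev, Fin.mk_le_mk] at hle
    have hxy : (x : X) ≠ y := fun h => hpq (by simp [f, h])
    obtain ⟨i, hi⟩ := hA x x.2
    have := antichainHeight_lt_antichainHeight hC hi (lt_of_le_of_ne hle.1 hxy)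
    omega
  · rw [Finset.card_image_of_injective _ fun x y h => Subtype.ext (congrArg Prod.fst h),
      Finset.card_univ, Fintype.card_coe]

end UnionOfAntichains

theorem card_filter_add_fin_eq {X : Type*} [Fintype X] (ρ : X → ℕ) (k c : ℕ) :
    (Finset.univ.filter fun p : X × Fin k => ρ p.1 + p.2 = c).card =
      (Finset.univ.filter fun x => ρ x ≤ c ∧ c < ρ x + k).card := by
  refine Finset.card_bij (fun p _ => p.1) (fun p hp => ?_) (fun p hp q hq h => ?_) fun x hx => ?_
  · simp only [Finset.mem_filter, Finset.mem_univ, true_and] at hp ⊢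
    omega
  · simp only [Finset.mem_filter, Finset.mem_univ, true_and] at hp hq
    exact Prod.ext h (Fin.ext (by rw [h] at hp; omega))
  · simp only [Finset.mem_filter, Finset.mem_univ, true_and, exists_prop] at hx ⊢
    exact ⟨(x, ⟨c - ρ x, by omega⟩), by simp; omega, rfl⟩

theorem card_filter_le_sup_sum_card {X : Type*} [Fintype X] (ρ : X → ℕ) {N : ℕ}
    (hρ : ∀ x, ρ x ≤ N) (k c : ℕ) :
    (Finset.univ.filter fun x => ρ x ≤ c ∧ c < ρ x + k).card ≤
      ((Finset.range (N + 1)).powerset.filter fun S => S.card ≤ k).sup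
        fun S => ∑ s ∈ S, (Finset.univ.filter fun x => ρ x = s).card := by
  let S := (Finset.range (N + 1)).filter fun s => s ≤ c ∧ c < s + k
  have hS : S.card ≤ k := by
    refine (Finset.card_le_card fun s hs => ?_).trans
      ((Finset.card_image_le (s := Finset.range k) (f := (c - ·))).trans (by simp))
    simp only [S, Finset.mem_filter, Finset.mem_range] at hs
    exact Finset.mem_image.mpr ⟨c - s, Finset.mem_range.mpr (by omega), by omega⟩
  have hmem : ∀ x ∈ Finset.univ.filter fun x => ρ x ≤ c ∧ c < ρ x + k, ρ x ∈ S := fun x hx => by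
    have := hρ x
    simp only [S, Finset.mem_filter, Finset.mem_univ, Finset.mem_range, true_and] at hx ⊢
    omega
  refine le_of_eq_of_le ?_ (Finset.le_sup (f := fun S => ∑ s ∈ S, _)
    (Finset.mem_filter.mpr ⟨Finset.mem_powerset.mpr (Finset.filter_subset _ _), hS⟩))
  rw [Finset.card_eq_sum_card_fiberwise hmem]
  refine Finset.sum_congr rfl fun s hs => congrArg Finset.card ?_
  rw [Finset.filter_filter]
  refine Finset.filter_congr fun x _ => ⟨fun h => h.2, fun h => ⟨?_, h⟩⟩
  simp only [Finset.mem_filter] at hs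
  omega

theorem youngL_strong_sperner_general (m n k : ℕ)
    (A : Finset (YoungL m n)) (C : Fin k → Finset (YoungL m n))
    (hC : ∀ i, IsAntichain (· ≤ ·) (C i : Set (YoungL m n)))
    (hA : A = Finset.univ.biUnion C) :
    A.card ≤
      (((Finset.range (m * n + 1)).powerset.filter fun S => S.card ≤ k).sup
        fun S => ∑ s ∈ S, youngRankNum m n s) := by
  obtain ⟨A', hA', hcard⟩ := exists_isAntichain_prod_fin hC A fun x hx => by simpa [hA] using hx
  set c := (m * n + (k - 1) + 1) / 2
  calc A.card = A'.card := hcard.symm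
    _ ≤ (Finset.univ.filter fun p : YoungL m n × Fin k => p.1.size + p.2 = c).card :=
      (YoungL.isRankedSl2.prod (isRankedSl2_chain k)).card_le_of_isAntichain
        YoungL.le_of_raise_kroneckerSum_ne_zero YoungL.le_of_lower_kroneckerSum_ne_zero hA'
    _ = (Finset.univ.filter fun x : YoungL m n => x.size ≤ c ∧ c < x.size + k).card :=
      card_filter_add_fin_eq _ _ _
    _ ≤ _ := card_filter_le_sup_sum_card YoungL.size YoungL.size_le k c

/-- `L(m,n)` has the strong Sperner property: if `A ⊆ L(m,n)` is a union of
`k` antichains, then `|A|` is at most the sum of the `k` largest rank numbers,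
i.e. the maximum of `∑_{s ∈ S} p_s` over subsets `S ⊆ {0, …, mn}` with at most
`k` elements. -/
theorem youngL_strong_sperner (m n k : ℕ) (hm : 0 < m) (hn : 0 < n) (hk : 0 < k)
    (A : Finset (YoungL m n)) (C : Fin k → Finset (YoungL m n))
    (hC : ∀ i, IsAntichain (· ≤ ·) (C i : Set (YoungL m n)))
    (hA : A = Finset.univ.biUnion C) :
    A.card ≤
      (((Finset.range (m * n + 1)).powerset.filter fun S => S.card ≤ k).sup
        fun S => ∑ s ∈ S, youngRankNum m n s) :=
  youngL_strong_sperner_general m n k A C hC hA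
end
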